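/- arXiv:1210.3802 — 9 statements merged into one kernel-verified Lean document; each statement's English description precedes it below -/
import Mathlib

section
/- The determinant of the (n−1)×(n−1) complex matrix whose (i,j) entry is S^{(a)}(v_i, v_j), for 1 ≤ i, j ≤ n−1, equals (a_1 a_2 ⋯ a_n)/|a|. -/
open Finset

/-- The contravariant form `S^{(a)}` on `V = ℂ^n` (coordinates in the standard basis
`F_1, …, F_n`), determined by `S^{(a)}(F_i, F_j) = δ_{ij} a_i`. -/
noncomputable def S1 {n : ℕ} (a : Fin n → ℂ) (x y : Fin n → ℂ) : ℂ :=
  ∑ j, a j * x j * y j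

/-- The vector `v_j = -F_j + (a_j/|a|) ∑_i F_i`, written in coordinates. -/
noncomputable def v1 {n : ℕ} (a : Fin n → ℂ) (j : Fin n) : Fin n → ℂ :=
  fun i => (if i = j then (-1 : ℂ) else 0) + a j / (∑ m, a m)

/-- The subspace `Sing V = {∑ c_j F_j : ∑ a_j c_j = 0}`. -/
noncomputable def singV1 {n : ℕ} (a : Fin n → ℂ) : Submodule ℂ (Fin n → ℂ) where
  carrier := {c | ∑ j, a j * c j = 0}
  add_mem' := by
    intro x y hx hy
    simp only [Set.mem_setOf_eq, Pi.add_apply, mul_add, Finset.sum_add_distrib] at *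
    simp [hx, hy]
  zero_mem' := by simp
  smul_mem' := by
    intro c x hx
    simp only [Set.mem_setOf_eq, Pi.smul_apply, smul_eq_mul] at *
    have h : ∑ j, a j * (c * x j) = c * ∑ j, a j * x j := by
      rw [Finset.mul_sum]
      exact Finset.sum_congr rfl fun j _ => by ring
    rw [h, hx, mul_zero]

/-! The Gram matrix of `v_1, …, v_{n-1}` is `diag(a') - |a|⁻¹ a' a'ᵀ` with `a' = (a_1, …, a_{n-1})`,
a rank-one perturbation of a diagonal matrix. The matrix determinant lemma gives
`∏ a' · (1 - (∑ a') / |a|) = ∏ a' · a_n / |a|`. -/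

theorem Matrix.det_diagonal_sub_smul_vecMulVec {ι R : Type*} [Fintype ι] [DecidableEq ι]
    [CommRing R] (d : ι → R) (c : R) :
    (diagonal d - c • vecMulVec d d).det = (∏ i, d i) * (1 - c * ∑ i, d i) := by
  have hfactor : diagonal d - c • vecMulVec d d =
      diagonal d * (1 + replicateCol Unit (fun _ => -c) * replicateRow Unit d) := by
    ext i j
    rw [← vecMulVec_eq, diagonal_mul]
    simp only [sub_apply, smul_apply, vecMulVec_apply, add_apply, one_apply, diagonal_apply,
      smul_eq_mul]
    split_ifs <;> ring
  rw [hfactor, det_mul, det_diagonal, det_one_add_replicateCol_mul_replicateRow, dotProduct,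
    ← Finset.sum_mul]
  ring

theorem S1_v1_v1 {n : ℕ} (a : Fin n → ℂ) (hA : ∑ j, a j ≠ 0) (p q : Fin n) :
    S1 a (v1 a p) (v1 a q) = Matrix.diagonal a p q - (∑ j, a j)⁻¹ * (a p * a q) := by
  simp only [S1, v1, Matrix.diagonal_apply, mul_add, add_mul, mul_ite, ite_mul, mul_neg,
    neg_mul, mul_one, mul_zero, zero_mul, Finset.sum_add_distrib, Finset.sum_ite_eq',
    Finset.mem_univ, if_true, ← Finset.sum_mul, eq_comm (a := q)]
  field_simp
  split_ifs <;> ring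

theorem stmt_2_general (n : ℕ) (hn : 2 ≤ n) (a : Fin n → ℂ)
    (hA : (∑ j, a j) ≠ 0) :
    Matrix.det (Matrix.of fun i j : Fin (n - 1) =>
        S1 a (v1 a (Fin.castLE (Nat.sub_le n 1) i)) (v1 a (Fin.castLE (Nat.sub_le n 1) j))) =
      (∏ j, a j) / (∑ j, a j) := by
  obtain ⟨m, rfl⟩ : ∃ m, n = m + 1 := ⟨n - 1, by omega⟩
  set a' : Fin (m + 1 - 1) → ℂ := fun i => a (Fin.castLE (Nat.sub_le (m + 1) 1) i)
  have hgram : (Matrix.of fun i j : Fin (m + 1 - 1) =>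
      S1 a (v1 a (Fin.castLE (Nat.sub_le (m + 1) 1) i))
        (v1 a (Fin.castLE (Nat.sub_le (m + 1) 1) j))) =
      Matrix.diagonal a' - (∑ j, a j)⁻¹ • Matrix.vecMulVec a' a' := by
    ext i j
    simp only [Matrix.of_apply, S1_v1_v1 a hA, Matrix.sub_apply, Matrix.smul_apply,
      Matrix.vecMulVec_apply, smul_eq_mul, Matrix.diagonal_apply, Fin.castLE_inj]
    rfl
  have hsum : ∑ j, a j = ∑ i, a' i + a (Fin.last m) := Fin.sum_univ_castSucc a
  have hprod : ∏ j, a j = (∏ i, a' i) * a (Fin.last m) := Fin.prod_univ_castSucc a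
  rw [hgram, Matrix.det_diagonal_sub_smul_vecMulVec, hprod]
  rw [hsum] at hA ⊢
  field_simp
  ring

/-- The determinant of the `(n-1)×(n-1)` matrix
`(S^{(a)}(v_i, v_j))_{1 ≤ i,j ≤ n-1}` equals `(a_1 ⋯ a_n)/|a|`. -/
theorem stmt_2 (n : ℕ) (hn : 2 ≤ n) (a : Fin n → ℂ) (ha : ∀ j, a j ≠ 0)
    (hA : (∑ j, a j) ≠ 0) :
    Matrix.det (Matrix.of fun i j : Fin (n - 1) =>
        S1 a (v1 a (Fin.castLE (Nat.sub_le n 1) i)) (v1 a (Fin.castLE (Nat.sub_le n 1) j))) =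
      (∏ j, a j) / (∑ j, a j) :=
  stmt_2_general n hn a hA
end

section
/- For every z ∈ ℂ^n with pairwise distinct coordinates and all i, j ∈ {1,…,n}, one has K_j(z) v_i = K_i(z) v_j. -/
open Finset

/-- The operator `L_{i,j} : V → V` with `L_{i,j}F_i = a_j F_i − a_i F_j`,
`L_{i,j}F_j = a_i F_j − a_j F_i`, `L_{i,j}F_m = 0` for `m ∉ {i,j}` (in coordinates). -/
noncomputable def L1 {n : ℕ} (a : Fin n → ℂ) (i j : Fin n) :
    (Fin n → ℂ) →ₗ[ℂ] (Fin n → ℂ) where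
  toFun x := fun m =>
    if m = i then (x i - x j) * a j else if m = j then (x j - x i) * a i else 0
  map_add' x y := by
    funext m
    simp only [Pi.add_apply]
    split_ifs <;> ring
  map_smul' c x := by
    funext m
    simp only [Pi.smul_apply, smul_eq_mul, RingHom.id_apply]
    split_ifs <;> ring

/-- The operator `K_j(z) = ∑_{i ≠ j} L_{j,i}/(z_j − z_i)`. -/
noncomputable def K1 {n : ℕ} (a : Fin n → ℂ) (z : Fin n → ℂ) (j : Fin n) :
    (Fin n → ℂ) →ₗ[ℂ] (Fin n → ℂ) :=
  ∑ i ∈ Finset.univ.erase j, (z j - z i)⁻¹ • L1 a j i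

/-
`v_q` is constant off the coordinate `q`, so `L_{p,k} v_q = 0` unless `k = q`: only one term of
`K_p(z) v_q` survives, namely `(a_q F_p - a_p F_q) / (z_p - z_q)`, which is antisymmetric in
`(p, q)` in both numerator and denominator.
-/

section

variable {n : ℕ} (a : Fin n → ℂ)

theorem L1_apply (i j : Fin n) (x : Fin n → ℂ) :
    L1 a i j x = (x i - x j) • (a j • Pi.single i 1 - a i • Pi.single j 1) := by
  funext m
  by_cases hmi : m = i <;> by_cases hmj : m = j <;> subst_vars <;> simp [L1, *]
  ring

theorem v1_apply_sub_of_ne {p q k : Fin n} (hp : p ≠ q) (hk : k ≠ q) :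
    v1 a q p - v1 a q k = 0 := by
  simp [v1, hp, hk]

theorem v1_apply_sub_self {p q : Fin n} (hp : p ≠ q) : v1 a q p - v1 a q q = 1 := by
  simp [v1, hp]

theorem K1_apply_v1 (z : Fin n → ℂ) {p q : Fin n} (hpq : p ≠ q) :
    K1 a z p (v1 a q) = (z p - z q)⁻¹ • (a q • Pi.single p 1 - a p • Pi.single q 1) := by
  simp only [K1, LinearMap.sum_apply, LinearMap.smul_apply, L1_apply]
  rw [Finset.sum_eq_single_of_mem q (by simpa using hpq.symm)]
  · rw [v1_apply_sub_self a hpq, one_smul]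
  · intro k _ hkq
    rw [v1_apply_sub_of_ne a hpq hkq, zero_smul, smul_zero]

end

theorem stmt_4_general (n : ℕ) (a : Fin n → ℂ) (z : Fin n → ℂ) :
    ∀ i j : Fin n, K1 a z j (v1 a i) = K1 a z i (v1 a j) := by
  intro i j
  rcases eq_or_ne i j with rfl | hij
  · rfl
  rw [K1_apply_v1 a z hij, K1_apply_v1 a z hij.symm, ← neg_sub (z i), inv_neg, neg_smul,
    ← smul_neg, neg_sub]

/-- For `z` with pairwise distinct coordinates, `K_j(z) v_i = K_i(z) v_j`
for all `i, j`. -/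
theorem stmt_4 (n : ℕ) (hn : 2 ≤ n) (a : Fin n → ℂ) (ha : ∀ j, a j ≠ 0)
    (hA : (∑ j, a j) ≠ 0) (z : Fin n → ℂ) (hz : Function.Injective z) :
    ∀ i j : Fin n, K1 a z j (v1 a i) = K1 a z i (v1 a j) :=
  stmt_4_general n a z
end

section
/- For every z ∈ ℂ^n, the period map q(z) = (1/|a|) Σ_{j=1}^n z_j v_j satisfies S^{(a)}(q(z), q(z)) = Σ_{1 ≤ i < j ≤ n} (a_i a_j / |a|³) (z_i − z_j)². (This is the potential function of first kind for the family of n points on the line.) -/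
/-! The `i`-th coordinate of `q(z)` is `(z̄ - z i) / |a|`, where `z̄ = (∑ a j * z j) / |a|` is the
weighted mean of `z`. Hence `S^{(a)}(q(z), q(z)) = |a|⁻² ∑ a i (z̄ - z i)²`, and this weighted
variance equals `(|a| ∑ a i z i² - (∑ a i z i)²) / |a|`; the numerator is
`∑_{i<j} a i a j (z i - z j)²` by Lagrange's identity. -/

open Finset

-- Lagrange's identity for the vectors `(√a i)` and `(√a i * z i)`, free of square roots.
theorem Finset.sum_sum_lt_mul_mul_sub_sq {ι R : Type*} [LinearOrder ι] [CommRing R]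
    (s : Finset ι) (a z : ι → R) :
    ∑ i ∈ s, ∑ j ∈ s.filter (fun j => i < j), a i * a j * (z i - z j) ^ 2 =
      (∑ i ∈ s, a i) * (∑ i ∈ s, a i * z i ^ 2) - (∑ i ∈ s, a i * z i) ^ 2 := by
  classical
  induction s using induction_on_max with
  | empty => simp
  | insert m s hlt ih =>
    have hm : m ∉ s := fun h => lt_irrefl m (hlt m h)
    have hfilter_m : (insert m s).filter (fun j => m < j) = ∅ :=
      filter_false_of_mem fun j hj => by grind
    have hfilter : ∀ i ∈ s, (insert m s).filter (fun j => i < j) =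
        insert m (s.filter (fun j => i < j)) := fun i hi => by
      rw [filter_insert, if_pos (hlt i hi)]
    have hnew : ∀ i ∈ s, m ∉ s.filter (fun j => i < j) := fun i _ h =>
      hm (mem_filter.1 h).1
    rw [sum_insert hm, hfilter_m, sum_empty, zero_add,
      sum_congr rfl fun i hi => by rw [hfilter i hi, sum_insert (hnew i hi)],
      sum_add_distrib, ih]
    simp only [sum_insert hm]
    have hexpand : ∑ i ∈ s, a i * a m * (z i - z m) ^ 2 = a m *
        ((∑ i ∈ s, a i * z i ^ 2) - 2 * z m * ∑ i ∈ s, a i * z i + z m ^ 2 * ∑ i ∈ s, a i) := by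
      simp only [mul_sum, ← sum_sub_distrib, ← sum_add_distrib]
      exact sum_congr rfl fun i _ => by ring
    rw [hexpand]
    ring

theorem Finset.sum_mul_div_sub_sq {ι K : Type*} [Field K] (s : Finset ι) (a z : ι → K)
    (hA : ∑ i ∈ s, a i ≠ 0) :
    ∑ i ∈ s, a i * ((∑ j ∈ s, a j * z j) / (∑ j ∈ s, a j) - z i) ^ 2 =
      ((∑ i ∈ s, a i) * (∑ i ∈ s, a i * z i ^ 2) - (∑ i ∈ s, a i * z i) ^ 2) /
        ∑ i ∈ s, a i := by
  set A := ∑ i ∈ s, a i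
  set B := ∑ i ∈ s, a i * z i
  have hexpand : ∑ i ∈ s, a i * (B / A - z i) ^ 2 =
      (B / A) ^ 2 * A - 2 * (B / A) * B + ∑ i ∈ s, a i * z i ^ 2 := by
    simp only [A, B, mul_sum, ← sum_sub_distrib, ← sum_add_distrib]
    exact sum_congr rfl fun i _ => by ring
  rw [hexpand]
  field_simp
  ring

theorem sum_smul_v1_apply {n : ℕ} (a z : Fin n → ℂ) (i : Fin n) :
    (∑ j, z j • v1 a j) i = (∑ j, a j * z j) / (∑ j, a j) - z i := by
  simp only [Finset.sum_apply, Pi.smul_apply, smul_eq_mul, v1, mul_add, mul_ite, mul_neg,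
    mul_one, mul_zero, sum_add_distrib, sum_ite_eq, mem_univ, if_true, sum_div]
  rw [neg_add_eq_sub]
  exact congrArg (· - z i) (sum_congr rfl fun j _ => by ring)

theorem S1_smul_smul {n : ℕ} (a x : Fin n → ℂ) (c : ℂ) :
    S1 a (c • x) (c • x) = c ^ 2 * S1 a x x := by
  simp only [S1, Pi.smul_apply, smul_eq_mul, mul_sum]
  exact sum_congr rfl fun j _ => by ring

theorem stmt_6_general (n : ℕ) (a : Fin n → ℂ)
    (hA : (∑ j, a j) ≠ 0) (z : Fin n → ℂ) :
    S1 a ((∑ m, a m)⁻¹ • ∑ j, z j • v1 a j) ((∑ m, a m)⁻¹ • ∑ j, z j • v1 a j) =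
      ∑ i, ∑ j ∈ Finset.univ.filter (fun j => i < j),
        (a i * a j / (∑ m, a m) ^ 3) * (z i - z j) ^ 2 := by
  set A := ∑ m, a m with hA_def
  calc S1 a (A⁻¹ • ∑ j, z j • v1 a j) (A⁻¹ • ∑ j, z j • v1 a j)
      = A⁻¹ ^ 2 * ∑ i, a i * ((∑ j, a j * z j) / A - z i) ^ 2 := by
        rw [S1_smul_smul]
        simp only [S1, sum_smul_v1_apply, ← hA_def, ← sq, mul_assoc]
    _ = (A * (∑ i, a i * z i ^ 2) - (∑ i, a i * z i) ^ 2) / A ^ 3 := by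
        rw [sum_mul_div_sub_sq _ _ _ hA, ← hA_def]
        field_simp
    _ = _ := by
        rw [← sum_sum_lt_mul_mul_sub_sq, sum_div]
        refine sum_congr rfl fun i _ => ?_
        rw [sum_div]
        exact sum_congr rfl fun j _ => by ring

/-- For every `z ∈ ℂ^n`, the period map `q(z) = (1/|a|) ∑_j z_j v_j`
satisfies `S^{(a)}(q(z), q(z)) = ∑_{i<j} (a_i a_j/|a|³)(z_i − z_j)²`. -/
theorem stmt_6 (n : ℕ) (hn : 2 ≤ n) (a : Fin n → ℂ) (ha : ∀ j, a j ≠ 0)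
    (hA : (∑ j, a j) ≠ 0) (z : Fin n → ℂ) :
    S1 a ((∑ m, a m)⁻¹ • ∑ j, z j • v1 a j) ((∑ m, a m)⁻¹ • ∑ j, z j • v1 a j) =
      ∑ i, ∑ j ∈ Finset.univ.filter (fun j => i < j),
        (a i * a j / (∑ m, a m) ^ 3) * (z i - z j) ^ 2 :=
  stmt_6_general n a hA z
end

section
/- Let a_1,…,a_n ∈ ℝ and let P̃(z) = (1/2) Σ_{1 ≤ i < j ≤ n} a_i a_j (z_i − z_j)² log(z_i − z_j) on the open set U = {z ∈ ℝ^n : z_1 > z_2 > ⋯ > z_n}. Then on U the third partial derivatives of P̃ are: ∂³P̃/∂z_i ∂z_j ∂z_ℓ = 0 for pairwise distinct i, j, ℓ; ∂³P̃/∂z_i² ∂z_j = −a_i a_j/(z_i − z_j) for i ≠ j; and ∂³P̃/∂z_i³ = Σ_{j ≠ i} a_i a_j/(z_i − z_j). (These third derivatives are the negatives of the structure constants of the multiplication ∂_i ∗_z ∂_j = (a_i/(z_i−z_j)) ∂_j + (a_j/(z_j−z_i)) ∂_i paired with the metric η; this is the content of the theorem d(∂²P̃/∂z_i∂z_j) =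 −η̃(∂_i) ∗_z η̃(∂_j) for the potential function of second kind of the family of n points on a line.) -/
open Finset

/-- Partial derivative in the `i`-th coordinate direction of a function on `ℝ^n`. -/
noncomputable def pd {n : ℕ} (i : Fin n) (f : (Fin n → ℝ) → ℝ) : (Fin n → ℝ) → ℝ :=
  fun z => deriv (fun t : ℝ => f (Function.update z i t)) (z i)

/-- The potential function of second kind
`P̃(z) = (1/2) ∑_{i<j} a_i a_j (z_i − z_j)² log(z_i − z_j)` for points on the line. -/
noncomputable def Ptil1 {n : ℕ} (a : Fin n → ℝ) : (Fin n → ℝ) → ℝ :=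
  fun z => (1 / 2) * ∑ i, ∑ j ∈ Finset.univ.filter (fun j => i < j),
    a i * a j * (z i - z j) ^ 2 * Real.log (z i - z j)

/-!
`P̃` is a pair sum `∑_{p,q} c_pq φ(z_p − z_q)` with `φ x = x² log x`. Differentiating a pair sum
in `z_k` gives again a pair sum, with `φ` replaced by `φ'` and `c_pq` multiplied by
`e_k = ∂(z_p − z_q)/∂z_k ∈ {−1, 0, 1}`; this holds on the open set of points with distinct
coordinates, so it can be iterated. After three steps `φ''' = 2/x`, and the coefficient
`c_pq e_m e_k e_l` vanishes unless `{m, k, l} ⊆ {p, q}`, so at most the pairs `(i, j)` and `(j, i)`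
contribute.
-/

open Function Real

section

variable {n : ℕ}

/-- `edgeSign k p q = ∂(z_p - z_q)/∂z_k`. -/
def edgeSign (k p q : Fin n) : ℝ := (if p = k then 1 else 0) - (if q = k then 1 else 0)

def pairSum (c : Fin n → Fin n → ℝ) (φ : ℝ → ℝ) (z : Fin n → ℝ) : ℝ :=
  ∑ p, ∑ q, c p q * φ (z p - z q)

lemma hasDerivAt_update_sub_update (z : Fin n → ℝ) (k p q : Fin n) :
    HasDerivAt (fun t => update z k t p - update z k t q) (edgeSign k p q) (z k) := by
  have hp := hasDerivAt_pi.mp (hasDerivAt_update z k (z k)) p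
  have hq := hasDerivAt_pi.mp (hasDerivAt_update z k (z k)) q
  simpa [edgeSign, Pi.single_apply] using hp.fun_sub hq

lemma pd_pairSum {φ φ' : ℝ → ℝ} (c : Fin n → Fin n → ℝ) (k : Fin n) {z : Fin n → ℝ}
    (hφ : ∀ p q, p ≠ q → HasDerivAt φ (φ' (z p - z q)) (z p - z q)) :
    pd k (pairSum c φ) z = pairSum (fun p q => c p q * edgeSign k p q) φ' z := by
  refine HasDerivAt.deriv (HasDerivAt.fun_sum fun p _ => HasDerivAt.fun_sum fun q _ => ?_)
  by_cases hpq : p = q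
  · subst hpq
    simpa [edgeSign] using hasDerivAt_const (z k) (c p p * φ 0)
  · have := ((hφ p q hpq).comp_of_eq (z k) (hasDerivAt_update_sub_update z k p q)
      (by simp)).const_mul (c p q)
    exact this.congr_deriv (by ring)

lemma isOpen_setOf_injective {ι X : Type*} [Finite ι] [TopologicalSpace X] [T2Space X] :
    IsOpen {z : ι → X | Injective z} := by
  have : {z : ι → X | Injective z} = ⋂ p, ⋂ q, {z | z p = z q → p = q} := by
    ext z; simp [Injective]
  rw [this]
  refine isOpen_iInter_of_finite fun p => isOpen_iInter_of_finite fun q => ?_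
  by_cases hpq : p = q
  · simp [hpq]
  · simpa [hpq] using isOpen_ne_fun (continuous_apply p) (continuous_apply q)

lemma Set.EqOn.pd {f g : (Fin n → ℝ) → ℝ} {U : Set (Fin n → ℝ)} (hfg : Set.EqOn f g U)
    (hU : IsOpen U) (k : Fin n) : Set.EqOn (pd k f) (pd k g) U := by
  intro z hz
  have hcont : Continuous (update z k) := continuous_const.update k continuous_id
  have hmem : update z k (z k) ∈ U := by rwa [update_eq_self]
  exact Filter.EventuallyEq.deriv_eq
    (Filter.eventually_of_mem (hcont.continuousAt.preimage_mem_nhds (hU.mem_nhds hmem))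
      fun _ ht => hfg ht)

lemma eqOn_pd_pairSum {φ φ' : ℝ → ℝ} (hφ : ∀ x ≠ 0, HasDerivAt φ (φ' x) x)
    (c : Fin n → Fin n → ℝ) (k : Fin n) :
    Set.EqOn (pd k (pairSum c φ)) (pairSum (fun p q => c p q * edgeSign k p q) φ')
      {z | Injective z} :=
  fun _ hz => pd_pairSum c k fun _ _ hpq => hφ _ (sub_ne_zero.mpr (hz.ne hpq))

lemma pd_pd_pd_pairSum {φ φ₁ φ₂ φ₃ : ℝ → ℝ} (hφ : ∀ x ≠ 0, HasDerivAt φ (φ₁ x) x)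
    (hφ₁ : ∀ x ≠ 0, HasDerivAt φ₁ (φ₂ x) x) (hφ₂ : ∀ x ≠ 0, HasDerivAt φ₂ (φ₃ x) x)
    (c : Fin n → Fin n → ℝ) (m k l : Fin n) {z : Fin n → ℝ} (hz : Injective z) :
    pd l (pd k (pd m (pairSum c φ))) z =
      pairSum (fun p q => c p q * (edgeSign m p q * edgeSign k p q * edgeSign l p q)) φ₃ z := by
  have hU : IsOpen {z : Fin n → ℝ | Injective z} := isOpen_setOf_injective
  have h := (((eqOn_pd_pairSum hφ c m).pd hU k).trans (eqOn_pd_pairSum hφ₁ _ k)).pd hU l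
    |>.trans (eqOn_pd_pairSum hφ₂ _ l)
  simp only [h hz, mul_assoc]

lemma edgeSign_mul_mul_eq_zero {m k l : Fin n} (hmk : m ≠ k) (hkl : k ≠ l) (hml : m ≠ l)
    (p q : Fin n) : edgeSign m p q * edgeSign k p q * edgeSign l p q = 0 := by
  unfold edgeSign
  split_ifs <;> simp_all

lemma pairSum_edgeSign_sq_mul {i j : Fin n} (hij : i ≠ j) (c : Fin n → Fin n → ℝ)
    (ψ : ℝ → ℝ) (z : Fin n → ℝ) :
    pairSum (fun p q => c p q * (edgeSign i p q * edgeSign i p q * edgeSign j p q)) ψ z =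
      c j i * ψ (z j - z i) - c i j * ψ (z i - z j) := by
  unfold pairSum
  rw [← Fintype.sum_prod_type' (f := fun p q => _),
    Fintype.sum_eq_add (i, j) (j, i) (by simp [hij])]
  · simp [edgeSign, hij, hij.symm]
    ring
  · rintro ⟨p, q⟩ ⟨h1, h2⟩
    simp only [edgeSign]
    split_ifs <;> simp_all

lemma pairSum_edgeSign_cube (i : Fin n) (c : Fin n → Fin n → ℝ) (ψ : ℝ → ℝ) (z : Fin n → ℝ) :
    pairSum (fun p q => c p q * (edgeSign i p q * edgeSign i p q * edgeSign i p q)) ψ z =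
      ∑ q, (c i q * ψ (z i - z q) - c q i * ψ (z q - z i)) := by
  have hcube : ∀ p q, edgeSign i p q * edgeSign i p q * edgeSign i p q = edgeSign i p q := by
    intro p q
    unfold edgeSign
    split_ifs <;> norm_num
  simp only [pairSum, hcube]
  simp [edgeSign, mul_sub, sub_mul, sum_sub_distrib]

lemma hasDerivAt_sq_mul_log {x : ℝ} (hx : x ≠ 0) :
    HasDerivAt (fun x => x ^ 2 * log x) (2 * (x * log x) + x) x := by
  have := (hasDerivAt_pow 2 x).mul (hasDerivAt_log hx)
  exact this.congr_deriv (by field_simp; ring)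

lemma hasDerivAt_two_mul_mul_log_add_self {x : ℝ} (hx : x ≠ 0) :
    HasDerivAt (fun x => 2 * (x * log x) + x) (2 * log x + 3) x :=
  (((hasDerivAt_mul_log hx).const_mul 2).fun_add (hasDerivAt_id' x)).congr_deriv (by ring)

lemma hasDerivAt_two_mul_log_add {x : ℝ} (hx : x ≠ 0) :
    HasDerivAt (fun x => 2 * log x + 3) (2 / x) x := by
  simpa [div_eq_mul_inv] using ((hasDerivAt_log hx).const_mul 2).add_const 3

noncomputable def ptilCoeff (a : Fin n → ℝ) (p q : Fin n) : ℝ :=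
  if p < q then a p * a q / 2 else 0

lemma Ptil1_eq_pairSum (a : Fin n → ℝ) :
    Ptil1 a = pairSum (ptilCoeff a) (fun x => x ^ 2 * log x) := by
  ext z
  simp only [Ptil1, pairSum, ptilCoeff, sum_filter, mul_sum, ite_mul, zero_mul, mul_ite, mul_zero]
  congr! 3
  ring

lemma ptilCoeff_add_swap (a : Fin n → ℝ) {p q : Fin n} (hpq : p ≠ q) :
    ptilCoeff a p q + ptilCoeff a q p = a p * a q / 2 := by
  rcases hpq.lt_or_gt with h | h
  · simp [ptilCoeff, h, h.not_gt]
  · simp [ptilCoeff, h, h.not_gt, mul_comm]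

end

/-- On the region `z_1 > z_2 > ⋯ > z_n` the third partial derivatives of
`P̃` are: `∂³P̃/∂z_i∂z_j∂z_ℓ = 0` for pairwise distinct `i, j, ℓ`;
`∂³P̃/∂z_i²∂z_j = −a_i a_j/(z_i − z_j)` for `i ≠ j`; and
`∂³P̃/∂z_i³ = ∑_{j≠i} a_i a_j/(z_i − z_j)`. -/
theorem stmt_7 (n : ℕ) (a : Fin n → ℝ) (z : Fin n → ℝ)
    (hz : ∀ i j : Fin n, i < j → z j < z i) :
    (∀ i j l : Fin n, i ≠ j → j ≠ l → i ≠ l →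
      pd l (pd j (pd i (Ptil1 a))) z = 0) ∧
    (∀ i j : Fin n, i ≠ j →
      pd j (pd i (pd i (Ptil1 a))) z = -(a i * a j) / (z i - z j)) ∧
    (∀ i : Fin n,
      pd i (pd i (pd i (Ptil1 a))) z =
        ∑ j ∈ Finset.univ.erase i, a i * a j / (z i - z j)) := by
  have hodd : ∀ x y : ℝ, 2 / (y - x) = -(2 / (x - y)) := fun x y => by rw [← neg_sub, div_neg]
  have hP : ∀ m k l, pd l (pd k (pd m (Ptil1 a))) z = pairSum
      (fun p q => ptilCoeff a p q * (edgeSign m p q * edgeSign k p q * edgeSign l p q))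
      (fun x => 2 / x) z := fun m k l => by
    rw [Ptil1_eq_pairSum]
    exact pd_pd_pd_pairSum (fun _ => hasDerivAt_sq_mul_log)
      (fun _ => hasDerivAt_two_mul_mul_log_add_self) (fun _ => hasDerivAt_two_mul_log_add)
      _ m k l (StrictAnti.injective hz)
  refine ⟨fun i j l hij hjl hil => ?_, fun i j hij => ?_, fun i => ?_⟩
  · simp [hP, pairSum, edgeSign_mul_mul_eq_zero hij hjl hil]
  · rw [hP, pairSum_edgeSign_sq_mul hij, hodd (z i)]
    linear_combination (-(2 / (z i - z j))) * ptilCoeff_add_swap a hij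
  · rw [hP, pairSum_edgeSign_cube, ← sum_erase _ (sub_self _)]
    refine sum_congr rfl fun j hj => ?_
    rw [hodd (z i)]
    linear_combination (2 / (z i - z j)) * ptilCoeff_add_swap a (ne_of_mem_erase hj).symm
end

section
/- For any four pairwise distinct indices i, j, k, ℓ and any z ∈ ℂ^n one has: f_{i,j,k}(z)/(d_{k,i} d_{i,j}) + f_{i,k,ℓ}(z)/(d_{ℓ,i} d_{i,k}) + f_{i,ℓ,j}(z)/(d_{j,i} d_{i,ℓ}) = 0, and f_{i,j,k}(z)²/(d_{i,j} d_{j,k} d_{k,i}) − f_{j,k,ℓ}(z)²/(d_{j,k} d_{k,ℓ} d_{ℓ,j}) + f_{k,ℓ,i}(z)²/(d_{k,ℓ} d_{ℓ,i} d_{i,k}) − f_{ℓ,i,j}(z)²/(d_{ℓ,i} d_{i,j} d_{j,ℓ}) = 0. -/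
/-! Both identities hold for any alternating `d` satisfying the three-term Plücker relation
`P := d_{ij} d_{kl} − d_{ik} d_{jl} + d_{il} d_{jk} = 0`, the relation among the `2 × 2` minors of
four vectors in a plane. After clearing denominators the first numerator is `P z_i` and the
second is `P` times a quadratic form in `z`. -/

/-- `d_{i,j} = b_i^1 b_j^2 − b_i^2 b_j^1`. -/
def dd2 {n : ℕ} (b : Fin n → Fin 2 → ℂ) (i j : Fin n) : ℂ :=
  b i 0 * b j 1 - b i 1 * b j 0

/-- `f_{i,j,k}(z) = d_{j,k} z_i + d_{k,i} z_j + d_{i,j} z_k`. -/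
def ff2 {n : ℕ} (b : Fin n → Fin 2 → ℂ) (z : Fin n → ℂ) (i j k : Fin n) : ℂ :=
  dd2 b j k * z i + dd2 b k i * z j + dd2 b i j * z k

section Pluecker

variable {K ι : Type*} [Field K]

def tripleForm (d : ι → ι → K) (z : ι → K) (i j k : ι) : K :=
  d j k * z i + d k i * z j + d i j * z k

variable {d : ι → ι → K} (z : ι → K) {i j k l : ι}

theorem tripleForm_div_add_div_add_div_eq_zero (hanti : ∀ i j, d j i = -d i j)
    (hP : d i j * d k l - d i k * d j l + d i l * d j k = 0)
    (hij : d i j ≠ 0) (hik : d i k ≠ 0) (hil : d i l ≠ 0) :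
    tripleForm d z i j k / (d k i * d i j) + tripleForm d z i k l / (d l i * d i k) +
        tripleForm d z i l j / (d j i * d i l) = 0 := by
  simp only [tripleForm, hanti i j, hanti i k, hanti i l, hanti j l]
  field_simp
  linear_combination -z i * hP

theorem tripleForm_sq_alternating_sum_eq_zero (hanti : ∀ i j, d j i = -d i j)
    (hP : d i j * d k l - d i k * d j l + d i l * d j k = 0)
    (hij : d i j ≠ 0) (hik : d i k ≠ 0) (hil : d i l ≠ 0)
    (hjk : d j k ≠ 0) (hjl : d j l ≠ 0) (hkl : d k l ≠ 0) :
    tripleForm d z i j k ^ 2 / (d i j * d j k * d k i) -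
        tripleForm d z j k l ^ 2 / (d j k * d k l * d l j) +
        tripleForm d z k l i ^ 2 / (d k l * d l i * d i k) -
        tripleForm d z l i j ^ 2 / (d l i * d i j * d j l) = 0 := by
  simp only [tripleForm, hanti i k, hanti i l, hanti j l]
  field_simp
  linear_combination -(d j k * d j l * d k l * z i ^ 2 - d i k * d i l * d k l * z j ^ 2 +
    d i j * d i l * d j l * z k ^ 2 - d i j * d i k * d j k * z l ^ 2) * hP

end Pluecker

theorem dd2_swap {n : ℕ} (b : Fin n → Fin 2 → ℂ) (i j : Fin n) : dd2 b j i = -dd2 b i j := by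
  unfold dd2
  ring

theorem dd2_pluecker {n : ℕ} (b : Fin n → Fin 2 → ℂ) (i j k l : Fin n) :
    dd2 b i j * dd2 b k l - dd2 b i k * dd2 b j l + dd2 b i l * dd2 b j k = 0 := by
  unfold dd2
  ring

theorem stmt_8_general (n : ℕ) (b : Fin n → Fin 2 → ℂ)
    (hd : ∀ i j : Fin n, i ≠ j → dd2 b i j ≠ 0)
    (z : Fin n → ℂ) (i j k l : Fin n)
    (hij : i ≠ j) (hik : i ≠ k) (hil : i ≠ l) (hjk : j ≠ k) (hjl : j ≠ l) (hkl : k ≠ l) :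
    ff2 b z i j k / (dd2 b k i * dd2 b i j) + ff2 b z i k l / (dd2 b l i * dd2 b i k) +
        ff2 b z i l j / (dd2 b j i * dd2 b i l) = 0 ∧
    ff2 b z i j k ^ 2 / (dd2 b i j * dd2 b j k * dd2 b k i) -
        ff2 b z j k l ^ 2 / (dd2 b j k * dd2 b k l * dd2 b l j) +
        ff2 b z k l i ^ 2 / (dd2 b k l * dd2 b l i * dd2 b i k) -
        ff2 b z l i j ^ 2 / (dd2 b l i * dd2 b i j * dd2 b j l) = 0 :=
  ⟨tripleForm_div_add_div_add_div_eq_zero z (dd2_swap b) (dd2_pluecker b i j k l)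
      (hd _ _ hij) (hd _ _ hik) (hd _ _ hil),
    tripleForm_sq_alternating_sum_eq_zero z (dd2_swap b) (dd2_pluecker b i j k l)
      (hd _ _ hij) (hd _ _ hik) (hd _ _ hil) (hd _ _ hjk) (hd _ _ hjl) (hd _ _ hkl)⟩

/-- The two Plücker-type identities among the `f_{i,j,k}` for four
pairwise distinct indices. -/
theorem stmt_8 (n : ℕ) (hn : 4 ≤ n) (b : Fin n → Fin 2 → ℂ)
    (hd : ∀ i j : Fin n, i ≠ j → dd2 b i j ≠ 0)
    (z : Fin n → ℂ) (i j k l : Fin n)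
    (hij : i ≠ j) (hik : i ≠ k) (hil : i ≠ l) (hjk : j ≠ k) (hjl : j ≠ l) (hkl : k ≠ l) :
    ff2 b z i j k / (dd2 b k i * dd2 b i j) + ff2 b z i k l / (dd2 b l i * dd2 b i k) +
        ff2 b z i l j / (dd2 b j i * dd2 b i l) = 0 ∧
    ff2 b z i j k ^ 2 / (dd2 b i j * dd2 b j k * dd2 b k i) -
        ff2 b z j k l ^ 2 / (dd2 b j k * dd2 b k l * dd2 b l j) +
        ff2 b z k l i ^ 2 / (dd2 b k l * dd2 b l i * dd2 b i k) -
        ff2 b z l i j ^ 2 / (dd2 b l i * dd2 b i j * dd2 b j l) = 0 :=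
  stmt_8_general n b hd z i j k l hij hik hil hjk hjl hkl
end

section
/- The following hold: (i) Sing V has dimension binom(n−1, 2) over ℂ; (ii) for all i ≠ j, v_{i,j} ∈ Sing V and F_{i,j} − v_{i,j} is orthogonal to Sing V with respect to S^{(a)} (so v_{i,j} is the orthogonal projection of F_{i,j}); (iii) Σ_{i=1}^n v_{i,j} = 0 for every j; (iv) for every m ∈ {1,…,n}, the vectors v_{i,j} with 1 ≤ i < j ≤ n and m ∉ {i,j} form a basis of Sing V. -/
open Finset

/-- The basis vector `F_{i,j}` of `V` in the coordinate model: an element of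
`Fin n → Fin n → ℂ` whose `(i,j)` entry is `1` and `(j,i)` entry is `-1`.
This realizes the relations `F_{j,i} = -F_{i,j}` and `F_{i,i} = 0`. -/
def F2 (n : ℕ) (i j : Fin n) : Fin n → Fin n → ℂ :=
  fun k l => (if k = i ∧ l = j then 1 else 0) - (if k = j ∧ l = i then 1 else 0)

/-- The space `V` spanned by the `F_{i,j}`: antisymmetric coefficient arrays. -/
noncomputable def skewV2 (n : ℕ) : Submodule ℂ (Fin n → Fin n → ℂ) where
  carrier := {x | ∀ i j, x j i = -x i j}
  add_mem' := by
    intro x y hx hy i j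
    simp only [Pi.add_apply, hx i j, hy i j]
    ring
  zero_mem' := by
    intro i j
    simp
  smul_mem' := by
    intro c x hx i j
    simp only [Pi.smul_apply, smul_eq_mul, hx i j]
    ring

/-- The subspace `Sing V ⊆ V` of singular vectors:
`{∑_{i<j} c_{i,j} F_{i,j} : ∑_{j<i} a_j c_{j,i} − ∑_{j>i} a_j c_{i,j} = 0 for every i}`. -/
noncomputable def singV2 (n : ℕ) (a : Fin n → ℂ) : Submodule ℂ (Fin n → Fin n → ℂ) where
  carrier := {x | (∀ i j, x j i = -x i j) ∧ ∀ i,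
    (∑ j ∈ Finset.univ.filter (fun j => j < i), a j * x j i) -
      (∑ j ∈ Finset.univ.filter (fun j => i < j), a j * x i j) = 0}
  add_mem' := by
    intro x y hx hy
    refine ⟨fun i j => ?_, fun i => ?_⟩
    · simp only [Pi.add_apply, hx.1 i j, hy.1 i j]; ring
    · have h1 := hx.2 i
      have h2 := hy.2 i
      simp only [Pi.add_apply, mul_add, Finset.sum_add_distrib]
      linear_combination h1 + h2
  zero_mem' := by
    constructor
    · intro i j; simp
    · intro i; simp
  smul_mem' := by
    intro c x hx
    refine ⟨fun i j => ?_, fun i => ?_⟩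
    · simp only [Pi.smul_apply, smul_eq_mul, hx.1 i j]; ring
    · have h := hx.2 i
      simp only [Pi.smul_apply, smul_eq_mul]
      have e1 : ∑ j ∈ Finset.univ.filter (fun j => j < i), a j * (c * x j i) =
          c * ∑ j ∈ Finset.univ.filter (fun j => j < i), a j * x j i := by
        rw [Finset.mul_sum]; exact Finset.sum_congr rfl fun j _ => by ring
      have e2 : ∑ j ∈ Finset.univ.filter (fun j => i < j), a j * (c * x i j) =
          c * ∑ j ∈ Finset.univ.filter (fun j => i < j), a j * x i j := by
        rw [Finset.mul_sum]; exact Finset.sum_congr rfl fun j _ => by ring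
      rw [e1, e2]
      linear_combination c * h

/-- The vector `v_{i,j} = F_{i,j} − (a_j/|a|) ∑_k F_{i,k} − (a_i/|a|) ∑_ℓ F_{ℓ,j}`
(for `i ≠ j`), and `v_{i,i} = 0`. -/
noncomputable def vv2 {n : ℕ} (a : Fin n → ℂ) (i j : Fin n) : Fin n → Fin n → ℂ :=
  if i = j then 0 else
    F2 n i j - (a j / ∑ m, a m) • (∑ k, F2 n i k) - (a i / ∑ m, a m) • (∑ l, F2 n l j)

/-- The contravariant form `S^{(a)}` with `S^{(a)}(F_{i,j}, F_{i,j}) = a_i a_j` for `i < j`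
and distinct basis vectors orthogonal, written on coordinates. -/
noncomputable def S2 {n : ℕ} (a : Fin n → ℂ) (x y : Fin n → Fin n → ℂ) : ℂ :=
  ∑ i, ∑ j ∈ Finset.univ.filter (fun j => i < j), a i * a j * x i j * y i j

/-- The operator `L_{i,j,k}` sending each of `F_{i,j}, F_{j,k}, F_{k,i}` to
`a_k F_{i,j} + a_i F_{j,k} + a_j F_{k,i}` and killing `F_{ℓ,m}` with `{ℓ,m} ⊄ {i,j,k}`. -/
noncomputable def L2 {n : ℕ} (a : Fin n → ℂ) (i j k : Fin n) :
    (Fin n → Fin n → ℂ) →ₗ[ℂ] (Fin n → Fin n → ℂ) where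
  toFun x := (x i j + x j k + x k i) •
    (a k • F2 n i j + a i • F2 n j k + a j • F2 n k i)
  map_add' x y := by
    simp only [Pi.add_apply]
    rw [← add_smul]
    congr 1
    ring
  map_smul' c x := by
    simp only [Pi.smul_apply, smul_eq_mul, RingHom.id_apply]
    rw [smul_smul]
    congr 1
    ring

/-- The operator `K_i(z) = ∑_{{j,k} ⊆ {1,…,n}∖{i}} (d_{j,k}/f_{i,j,k}(z)) L_{i,j,k}`,
the sum over unordered pairs `{j,k}` realized by `j < k`. -/
noncomputable def K2 {n : ℕ} (a : Fin n → ℂ) (b : Fin n → Fin 2 → ℂ) (z : Fin n → ℂ)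
    (i : Fin n) : (Fin n → Fin n → ℂ) →ₗ[ℂ] (Fin n → Fin n → ℂ) :=
  ∑ j ∈ Finset.univ.erase i, ∑ k ∈ Finset.univ.filter (fun k => j < k ∧ k ≠ i),
    (dd2 b j k / ff2 b z i j k) • L2 a i j k

/-! With `pairDiff c = (c_k - c_l)_{k,l}` one has `∑_k F_{i,k} = pairDiff e_i`, hence
`v_{i,j} = F_{i,j} - pairDiff c` with `c = (a_j e_i - a_i e_j)/|a|`. The form `S^{(a)}(pairDiff c, w)`
telescopes to the defining relations of `Sing V`, which gives the orthogonality. The functionals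
`x ↦ x_{i,j} - x_{i,m} + x_{j,m}` (`i < j`, both `≠ m`) kill every `pairDiff c` and are dual to
the `F_{i,j}`, hence to the `v_{i,j}`. A singular vector killed by all of them is a `pairDiff c`,
and that satisfies the relations of `Sing V` only for constant `c`, i.e. it is zero; so the
`v_{i,j}` avoiding `m` also span `Sing V`, whose dimension is then the number of such pairs. -/

section PairDiff

variable {ι R : Type*} [CommRing R]

def pairDiff : (ι → R) →ₗ[R] ι → ι → R where
  toFun c p q := c p - c q
  map_add' c d := by ext; simp only [Pi.add_apply]; ring
  map_smul' r c := by ext; simp only [Pi.smul_apply, smul_eq_mul, RingHom.id_apply]; ring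

@[simp]
lemma pairDiff_apply (c : ι → R) (p q : ι) : pairDiff c p q = c p - c q := rfl

lemma pairDiff_const (r : R) : pairDiff (fun _ : ι => r) = 0 := by
  ext; simp

variable [LinearOrder ι]

abbrev OffPairs (m : ι) := {p : ι × ι // p.1 < p.2 ∧ p.1 ≠ m ∧ p.2 ≠ m}

def cycleEval (m : ι) : (ι → ι → R) →ₗ[R] OffPairs m → R where
  toFun x p := x p.1.1 p.1.2 - x p.1.1 m + x p.1.2 m
  map_add' x y := by ext; simp only [Pi.add_apply]; ring
  map_smul' r x := by ext; simp only [Pi.smul_apply, smul_eq_mul, RingHom.id_apply]; ring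

@[simp]
lemma cycleEval_apply (m : ι) (x : ι → ι → R) (p : OffPairs m) :
    cycleEval m x p = x p.1.1 p.1.2 - x p.1.1 m + x p.1.2 m := rfl

lemma cycleEval_pairDiff (m : ι) (c : ι → R) : cycleEval m (pairDiff c) = 0 := by
  ext; simp

lemma card_offPairs [Fintype ι] (m : ι) :
    Fintype.card (OffPairs m) = (Fintype.card ι - 1).choose 2 := by
  rw [Fintype.card_subtype, ← card_univ, ← card_erase_of_mem (mem_univ m),
    ← card_product_filter_lt]
  congr 1
  ext p
  simp only [mem_filter, mem_univ, true_and, mem_product, mem_erase, ne_eq]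
  tauto

end PairDiff

lemma eq_pairDiff_of_cycleEval_eq_zero {ι K : Type*} [LinearOrder ι] [Field K] [CharZero K]
    {w : ι → ι → K} (hw : ∀ i j, w j i = -w i j) {m : ι} (h : cycleEval m w = 0) :
    w = pairDiff fun k => w k m := by
  have hdiag : ∀ k, w k k = 0 := fun k => self_eq_neg.mp (hw k k)
  have hoff : ∀ k l, k < l → k ≠ m → l ≠ m → w k l = w k m - w l m := fun k l hkl hk hl => by
    have := congrFun h ⟨(k, l), hkl, hk, hl⟩
    simp only [cycleEval_apply, Pi.zero_apply] at this
    linear_combination this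
  ext k l
  rw [pairDiff_apply]
  rcases eq_or_ne k m with rfl | hk
  · rw [hw, hdiag]; ring
  rcases eq_or_ne l m with rfl | hl
  · rw [hdiag]; ring
  rcases lt_trichotomy k l with hkl | rfl | hkl
  · exact hoff k l hkl hk hl
  · rw [hdiag, sub_self]
  · rw [hw, hoff l k hkl hl hk]; ring

section SingularVectors

variable {n : ℕ} (a : Fin n → ℂ)

lemma F2_swap (i j k l : Fin n) : F2 n i j l k = -F2 n i j k l := by
  grind [F2]

lemma sum_F2_right (i : Fin n) : ∑ k, F2 n i k = pairDiff (Pi.single i 1) := by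
  ext k l
  simp [F2, Finset.sum_apply, Pi.single_apply, ite_and]

lemma sum_F2_left (j : Fin n) : ∑ l, F2 n l j = -pairDiff (Pi.single j 1) := by
  ext k l
  simp [F2, Finset.sum_apply, Pi.single_apply, ite_and]

noncomputable def normalCoeff (i j : Fin n) : Fin n → ℂ :=
  (a j / ∑ m, a m) • Pi.single i 1 - (a i / ∑ m, a m) • Pi.single j 1

lemma vv2_eq_F2_sub (i j : Fin n) : vv2 a i j = F2 n i j - pairDiff (normalCoeff a i j) := by
  rw [vv2]
  split_ifs with hij
  · subst hij
    ext k l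
    simp [F2, normalCoeff]
  · rw [sum_F2_right, sum_F2_left, normalCoeff, map_sub, map_smul, map_smul]
    module

lemma mem_singV2_iff (x : Fin n → Fin n → ℂ) :
    x ∈ singV2 n a ↔ (∀ i j, x j i = -x i j) ∧ ∀ i, ∑ j, a j * x i j = 0 := by
  refine and_congr_right fun hx => forall_congr' fun i => ?_
  have hdiag : x i i = 0 := self_eq_neg.mp (hx i i)
  have hsplit : ∑ j, a j * x i j = ∑ j ∈ univ.filter (· < i), a j * x i j +
      ∑ j ∈ univ.filter (i < ·), a j * x i j := by
    rw [sum_filter, sum_filter, ← sum_add_distrib]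
    refine sum_congr rfl fun j _ => ?_
    rcases lt_trichotomy j i with h | rfl | h
    · simp [h, h.not_gt]
    · simp [hdiag]
    · simp [h, h.not_gt]
  have hlow : ∑ j ∈ univ.filter (· < i), a j * x j i =
      -∑ j ∈ univ.filter (· < i), a j * x i j := by
    rw [← sum_neg_distrib]
    exact sum_congr rfl fun j _ => by rw [hx i j, mul_neg]
  rw [hlow, hsplit]
  constructor <;> intro h <;> linear_combination -h

lemma sum_mul_pairDiff (c : Fin n → ℂ) (k : Fin n) :
    ∑ l, a l * pairDiff c k l = (∑ l, a l) * c k - ∑ l, a l * c l := by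
  simp only [pairDiff_apply, mul_sub, sum_sub_distrib, ← sum_mul, mul_comm]

lemma vv2_mem_singV2 (hA : (∑ m, a m) ≠ 0) (i j : Fin n) : vv2 a i j ∈ singV2 n a := by
  rw [mem_singV2_iff, vv2_eq_F2_sub]
  refine ⟨fun k l => ?_, fun k => ?_⟩
  · simp only [Pi.sub_apply, pairDiff_apply]
    rw [F2_swap]
    ring
  · have hF : ∑ l, a l * F2 n i j k l =
        a j * (Pi.single i 1 : Fin n → ℂ) k - a i * (Pi.single j 1 : Fin n → ℂ) k := by
      simp [F2, Pi.single_apply, ite_and, mul_sub, sum_sub_distrib]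
    have hc : ∑ l, a l * normalCoeff a i j l = 0 := by
      simp only [normalCoeff, Pi.sub_apply, Pi.smul_apply, Pi.single_apply, smul_eq_mul, mul_ite,
        mul_one, mul_zero, mul_sub, sum_sub_distrib, sum_ite_eq', mem_univ, ↓reduceIte]
      ring
    have hck : (∑ m, a m) * normalCoeff a i j k =
        a j * (Pi.single i 1 : Fin n → ℂ) k - a i * (Pi.single j 1 : Fin n → ℂ) k := by
      simp only [normalCoeff, Pi.sub_apply, Pi.smul_apply, smul_eq_mul]
      field_simp
    simp only [Pi.sub_apply, mul_sub, sum_sub_distrib, sum_mul_pairDiff, hF, hc, hck]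
    ring

lemma sum_vv2_left (hA : (∑ m, a m) ≠ 0) (j : Fin n) : ∑ i, vv2 a i j = 0 := by
  have hc : ∑ i, normalCoeff a i j = (a j / ∑ m, a m) • (fun _ => 1) - Pi.single j 1 := by
    simp only [normalCoeff, sum_sub_distrib, ← smul_sum, ← sum_smul, Finset.univ_sum_single]
    rw [← sum_div, div_self hA, one_smul]
  simp_rw [vv2_eq_F2_sub, sum_sub_distrib, ← map_sum, sum_F2_left, hc, map_sub, map_smul]
  rw [pairDiff_const, smul_zero]
  abel

lemma S2_pairDiff_eq_zero (c : Fin n → ℂ) {w : Fin n → Fin n → ℂ} (hw : w ∈ singV2 n a) :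
    S2 a (pairDiff c) w = 0 := by
  have hswap : ∑ p, ∑ q ∈ univ.filter (p < ·), a p * a q * c q * w p q =
      ∑ q, a q * c q * ∑ p ∈ univ.filter (· < q), a p * w p q := by
    rw [sum_comm' (t' := univ) (s' := fun q => univ.filter (· < q)) (by simp)]
    simp only [mul_sum]
    exact sum_congr rfl fun q _ => sum_congr rfl fun p _ => by ring
  calc S2 a (pairDiff c) w
      = ∑ p, a p * c p * ∑ q ∈ univ.filter (p < ·), a q * w p q -
          ∑ p, ∑ q ∈ univ.filter (p < ·), a p * a q * c q * w p q := by
        simp only [S2, pairDiff_apply, mul_sum, ← sum_sub_distrib]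
        exact sum_congr rfl fun p _ => sum_congr rfl fun q _ => by ring
    _ = 0 := by
        rw [hswap, ← sum_sub_distrib]
        exact sum_eq_zero fun q _ => by linear_combination -(a q * c q) * hw.2 q

lemma cycleEval_F2 {m : Fin n} (p : OffPairs m) :
    cycleEval m (F2 n p.1.1 p.1.2) = Pi.single p 1 := by
  obtain ⟨⟨i, j⟩, hij, him, hjm⟩ := p
  ext ⟨⟨k, l⟩, hkl, hkm, hlm⟩
  simp only [cycleEval_apply, F2, Pi.single_apply, Subtype.mk.injEq, Prod.mk.injEq]
  split_ifs <;> grind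

lemma cycleEval_vv2 {m : Fin n} (p : OffPairs m) :
    cycleEval m (vv2 a p.1.1 p.1.2) = Pi.single p 1 := by
  rw [vv2_eq_F2_sub, map_sub, cycleEval_F2, cycleEval_pairDiff, sub_zero]

lemma linearIndependent_vv2 (m : Fin n) :
    LinearIndependent ℂ fun p : OffPairs m => vv2 a p.1.1 p.1.2 := by
  refine LinearIndependent.of_comp (cycleEval m) ?_
  convert (Pi.basisFun ℂ (OffPairs m)).linearIndependent
  ext1 p
  rw [Function.comp_apply, cycleEval_vv2, Pi.basisFun_apply]

lemma eq_zero_of_mem_singV2_of_cycleEval_eq_zero (hA : (∑ m, a m) ≠ 0) {m : Fin n}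
    {w : Fin n → Fin n → ℂ} (hw : w ∈ singV2 n a) (h : cycleEval m w = 0) : w = 0 := by
  rw [mem_singV2_iff] at hw
  obtain ⟨hskew, hrow⟩ := hw
  have hD := eq_pairDiff_of_cycleEval_eq_zero hskew h
  have hconst : ∀ k, w k m = w m m := fun k => by
    have hk := hrow k
    have hm := hrow m
    rw [hD, sum_mul_pairDiff] at hk hm
    exact mul_left_cancel₀ hA (by linear_combination hk - hm)
  rw [hD]
  ext k l
  simp [hconst, self_eq_neg.mp (hskew m m)]

lemma span_vv2_eq_singV2 (hA : (∑ m, a m) ≠ 0) (m : Fin n) :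
    Submodule.span ℂ (Set.range fun p : OffPairs m => vv2 a p.1.1 p.1.2) = singV2 n a := by
  refine le_antisymm
    (Submodule.span_le.mpr (Set.range_subset_iff.mpr fun p => vv2_mem_singV2 a hA _ _))
    fun w hw => ?_
  set u := ∑ p : OffPairs m, cycleEval m w p • vv2 a p.1.1 p.1.2
  have hu : u ∈ Submodule.span ℂ (Set.range fun p : OffPairs m => vv2 a p.1.1 p.1.2) :=
    Submodule.sum_mem _ fun p _ => Submodule.smul_mem _ _ (Submodule.subset_span ⟨p, rfl⟩)
  have hu' : u ∈ singV2 n a := Submodule.span_le.mpr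
    (Set.range_subset_iff.mpr fun p => vv2_mem_singV2 a hA _ _) hu
  have hcycle : cycleEval m (w - u) = 0 := by
    simp only [u, map_sub, map_sum, map_smul, cycleEval_vv2]
    rw [← pi_eq_sum_univ', sub_self]
  rwa [sub_eq_zero.mp (eq_zero_of_mem_singV2_of_cycleEval_eq_zero a hA
    (sub_mem hw hu') hcycle)]

lemma finrank_singV2 (hA : (∑ m, a m) ≠ 0) :
    Module.finrank ℂ (singV2 n a) = (n - 1).choose 2 := by
  cases n with
  | zero => simp at hA
  | succ n =>
    rw [← span_vv2_eq_singV2 a hA 0, finrank_span_eq_card (linearIndependent_vv2 a 0),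
      card_offPairs, Fintype.card_fin]

end SingularVectors

theorem stmt_9_general (n : ℕ) (a : Fin n → ℂ) (hA : (∑ j, a j) ≠ 0) :
    Module.finrank ℂ (singV2 n a) = (n - 1).choose 2 ∧
    (∀ i j : Fin n, i ≠ j → vv2 a i j ∈ singV2 n a ∧
      ∀ w ∈ singV2 n a, S2 a (F2 n i j - vv2 a i j) w = 0) ∧
    (∀ j : Fin n, (∑ i, vv2 a i j) = 0) ∧
    (∀ m : Fin n,
      LinearIndependent ℂ
        (fun p : {p : Fin n × Fin n // p.1 < p.2 ∧ p.1 ≠ m ∧ p.2 ≠ m} =>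
          vv2 a p.1.1 p.1.2) ∧
      Submodule.span ℂ
          (Set.range (fun p : {p : Fin n × Fin n // p.1 < p.2 ∧ p.1 ≠ m ∧ p.2 ≠ m} =>
            vv2 a p.1.1 p.1.2)) = singV2 n a) := by
  refine ⟨finrank_singV2 a hA, fun i j _ => ⟨vv2_mem_singV2 a hA i j, fun w hw => ?_⟩,
    sum_vv2_left a hA, fun m => ⟨linearIndependent_vv2 a m, span_vv2_eq_singV2 a hA m⟩⟩
  rw [vv2_eq_F2_sub, sub_sub_cancel]
  exact S2_pairDiff_eq_zero a _ hw

/-- (i) `dim Sing V = C(n−1,2)`; (ii) `v_{i,j} ∈ Sing V` and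
`F_{i,j} − v_{i,j} ⟂ Sing V`; (iii) `∑_i v_{i,j} = 0`; (iv) for every `m` the vectors
`v_{i,j}`, `i < j`, `m ∉ {i,j}`, form a basis of `Sing V`. -/
theorem stmt_9 (n : ℕ) (hn : 3 ≤ n) (b : Fin n → Fin 2 → ℂ)
    (hd : ∀ i j : Fin n, i ≠ j → dd2 b i j ≠ 0)
    (a : Fin n → ℂ) (ha : ∀ j, a j ≠ 0) (hA : (∑ j, a j) ≠ 0) :
    Module.finrank ℂ (singV2 n a) = (n - 1).choose 2 ∧
    (∀ i j : Fin n, i ≠ j → vv2 a i j ∈ singV2 n a ∧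
      ∀ w ∈ singV2 n a, S2 a (F2 n i j - vv2 a i j) w = 0) ∧
    (∀ j : Fin n, (∑ i, vv2 a i j) = 0) ∧
    (∀ m : Fin n,
      LinearIndependent ℂ
        (fun p : {p : Fin n × Fin n // p.1 < p.2 ∧ p.1 ≠ m ∧ p.2 ≠ m} =>
          vv2 a p.1.1 p.1.2) ∧
      Submodule.span ℂ
          (Set.range (fun p : {p : Fin n × Fin n // p.1 < p.2 ∧ p.1 ≠ m ∧ p.2 ≠ m} =>
            vv2 a p.1.1 p.1.2)) = singV2 n a) :=
  stmt_9_general n a hA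
end

section
/- For every z ∈ ℂ^n with f_{i,j,k}(z) ≠ 0 for all triples of distinct indices, and every i ∈ {1,…,n}: the operator K_i(z) preserves the subspace Sing V ⊆ V, and K_i(z) is symmetric with respect to the contravariant form, i.e. S^{(a)}(K_i(z) v, w) = S^{(a)}(v, K_i(z) w) for all v, w ∈ V. -/
/-!
Each `L_{i,j,k}` has rank one: it is `x ↦ c(x) • w` with `c(x) = x_{ij} + x_{jk} + x_{ki}` and
`w = a_k F_{ij} + a_i F_{jk} + a_j F_{ki}`. The weighted column sums `∑_l a_l w_{lm}` of `w`
cancel identically, so `w ∈ Sing V`, and on `V` one computes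
`S(L_{i,j,k} x, y) = a_i a_j a_k c(x) c(y)`, which is symmetric in `x, y`.
Both properties pass to the linear combination `K_i(z)`.
-/

open Finset

section

variable {n : ℕ}

lemma F2_apply_swap (p q l m : Fin n) : F2 n p q m l = -F2 n p q l m := by
  simp only [F2, neg_sub, and_comm]

lemma sum_mul_F2_apply (a : Fin n → ℂ) (p q m : Fin n) :
    ∑ l, a l * F2 n p q l m = (if m = q then a p else 0) - (if m = p then a q else 0) := by
  simp [F2, mul_sub, Finset.sum_sub_distrib, ite_and]

lemma sum_filter_lt_ite_and_eq {ι M : Type*} [Fintype ι] [LinearOrder ι] [AddCommMonoid M]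
    (g : ι → ι → M) (p q : ι) :
    ∑ l, ∑ m ∈ univ.filter (l < ·), (if l = p ∧ m = q then g l m else 0) =
      if p < q then g p q else 0 := by
  simp [ite_and, Finset.sum_ite_eq', Finset.sum_ite_irrel]

lemma mem_singV2_of_sum_mul_eq_zero (a : Fin n → ℂ) (x : Fin n → Fin n → ℂ)
    (hx : ∀ p q, x q p = -x p q) (hcol : ∀ m, ∑ l, a l * x l m = 0) :
    x ∈ singV2 n a := by
  refine ⟨hx, fun m => ?_⟩
  have hlt_or_gt : univ.filter (fun l => ¬ l < m) = insert m (univ.filter (m < ·)) := by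
    ext l
    simp [le_iff_lt_or_eq, eq_comm, or_comm]
  have hsplit : ∑ l, a l * x l m = (∑ l ∈ univ.filter (· < m), a l * x l m) +
      ∑ l ∈ univ.filter (m < ·), a l * x l m := by
    rw [← Finset.sum_filter_add_sum_filter_not univ (· < m), hlt_or_gt,
      Finset.sum_insert (by simp), self_eq_neg.mp (hx m m), mul_zero, zero_add]
  have hupper : ∑ l ∈ univ.filter (m < ·), a l * x m l =
      -∑ l ∈ univ.filter (m < ·), a l * x l m := by
    rw [← Finset.sum_neg_distrib]
    exact Finset.sum_congr rfl fun l _ => by rw [hx l m, mul_neg]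
  rw [hupper, sub_neg_eq_add, ← hsplit, hcol m]

lemma S2_add_left (a : Fin n → ℂ) (x x' y : Fin n → Fin n → ℂ) :
    S2 a (x + x') y = S2 a x y + S2 a x' y := by
  simp only [S2, Pi.add_apply, ← Finset.sum_add_distrib]
  exact Finset.sum_congr rfl fun _ _ => Finset.sum_congr rfl fun _ _ => by ring

lemma S2_smul_left (a : Fin n → ℂ) (c : ℂ) (x y : Fin n → Fin n → ℂ) :
    S2 a (c • x) y = c * S2 a x y := by
  simp only [S2, Pi.smul_apply, smul_eq_mul, Finset.mul_sum]
  exact Finset.sum_congr rfl fun _ _ => Finset.sum_congr rfl fun _ _ => by ring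

lemma S2_comm (a : Fin n → ℂ) (x y : Fin n → Fin n → ℂ) :
    S2 a x y = S2 a y x :=
  Finset.sum_congr rfl fun _ _ => Finset.sum_congr rfl fun _ _ => by ring

lemma S2_sum_left {ι : Type*} (a : Fin n → ℂ) (s : Finset ι)
    (g : ι → Fin n → Fin n → ℂ) (y : Fin n → Fin n → ℂ) :
    S2 a (∑ t ∈ s, g t) y = ∑ t ∈ s, S2 a (g t) y := by
  classical
  induction s using Finset.induction with
  | empty => simp [S2]
  | insert _ _ h ih => rw [Finset.sum_insert h, S2_add_left, ih, Finset.sum_insert h]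

lemma S2_F2 (a : Fin n → ℂ) (y : Fin n → Fin n → ℂ)
    (hy : ∀ p q, y q p = -y p q) (p q : Fin n) :
    S2 a (F2 n p q) y = a p * a q * y p q := by
  simp only [S2, F2, mul_sub, sub_mul, mul_ite, ite_mul, mul_one, mul_zero, zero_mul,
    Finset.sum_sub_distrib, sum_filter_lt_ite_and_eq]
  rcases lt_trichotomy p q with hpq | rfl | hpq
  · rw [if_pos hpq, if_neg hpq.not_gt, sub_zero]
  · simp [self_eq_neg.mp (hy p p)]
  · rw [if_neg hpq.not_gt, if_pos hpq, hy q p]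
    ring

lemma L2_apply (a : Fin n → ℂ) (i j k : Fin n) (x : Fin n → Fin n → ℂ) :
    L2 a i j k x =
      (x i j + x j k + x k i) • (a k • F2 n i j + a i • F2 n j k + a j • F2 n k i) :=
  rfl

lemma L2_apply_mem_singV2 (a : Fin n → ℂ) (i j k : Fin n) (x : Fin n → Fin n → ℂ) :
    L2 a i j k x ∈ singV2 n a := by
  rw [L2_apply]
  refine Submodule.smul_mem _ _ (mem_singV2_of_sum_mul_eq_zero a _ (fun p q => ?_) fun m => ?_)
  · simp only [Pi.add_apply, Pi.smul_apply, smul_eq_mul, F2_apply_swap _ _ p q]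
    ring
  · simp only [Pi.add_apply, Pi.smul_apply, smul_eq_mul, mul_add, Finset.sum_add_distrib,
      mul_left_comm (a _) (a k), mul_left_comm (a _) (a i), mul_left_comm (a _) (a j),
      ← Finset.mul_sum, sum_mul_F2_apply]
    split_ifs <;> ring

lemma K2_apply_mem_singV2 (a : Fin n → ℂ) (b : Fin n → Fin 2 → ℂ) (z : Fin n → ℂ)
    (i : Fin n) (x : Fin n → Fin n → ℂ) : K2 a b z i x ∈ singV2 n a := by
  simp only [K2, LinearMap.sum_apply, LinearMap.smul_apply]
  exact Submodule.sum_mem _ fun j _ => Submodule.sum_mem _ fun k _ =>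
    Submodule.smul_mem _ _ (L2_apply_mem_singV2 a i j k x)

lemma S2_L2_apply (a : Fin n → ℂ) (i j k : Fin n) (x y : Fin n → Fin n → ℂ)
    (hy : ∀ p q, y q p = -y p q) :
    S2 a (L2 a i j k x) y
      = a i * a j * a k * (x i j + x j k + x k i) * (y i j + y j k + y k i) := by
  rw [L2_apply, S2_smul_left, S2_add_left, S2_add_left, S2_smul_left, S2_smul_left,
    S2_smul_left, S2_F2 a y hy, S2_F2 a y hy, S2_F2 a y hy]
  ring

lemma S2_L2_apply_comm (a : Fin n → ℂ) (i j k : Fin n) {x y : Fin n → Fin n → ℂ}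
    (hx : ∀ p q, x q p = -x p q) (hy : ∀ p q, y q p = -y p q) :
    S2 a (L2 a i j k x) y = S2 a x (L2 a i j k y) := by
  rw [S2_comm a x, S2_L2_apply a i j k x y hy, S2_L2_apply a i j k y x hx]
  ring

lemma S2_K2_apply_comm (a : Fin n → ℂ) (b : Fin n → Fin 2 → ℂ) (z : Fin n → ℂ)
    (i : Fin n) {x y : Fin n → Fin n → ℂ}
    (hx : ∀ p q, x q p = -x p q) (hy : ∀ p q, y q p = -y p q) :
    S2 a (K2 a b z i x) y = S2 a x (K2 a b z i y) := by
  simp only [K2, LinearMap.sum_apply, LinearMap.smul_apply]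
  rw [S2_sum_left, S2_comm a x, S2_sum_left]
  refine Finset.sum_congr rfl fun j _ => ?_
  rw [S2_sum_left, S2_sum_left]
  refine Finset.sum_congr rfl fun k _ => ?_
  rw [S2_smul_left, S2_smul_left, S2_L2_apply_comm a i j k hx hy, S2_comm a x]

end

theorem stmt_12_general (n : ℕ) (b : Fin n → Fin 2 → ℂ) (a : Fin n → ℂ) (z : Fin n → ℂ)
    (i : Fin n) :
    (∀ x ∈ singV2 n a, K2 a b z i x ∈ singV2 n a) ∧
    (∀ x ∈ skewV2 n, ∀ y ∈ skewV2 n,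
      S2 a (K2 a b z i x) y = S2 a x (K2 a b z i y)) :=
  ⟨fun x _ => K2_apply_mem_singV2 a b z i x, fun _ hx _ hy => S2_K2_apply_comm a b z i hx hy⟩

/-- For every `z` with all `f_{i,j,k}(z) ≠ 0` and every `i`, the operator
`K_i(z)` preserves `Sing V ⊆ V` and is symmetric with respect to the contravariant form:
`S^{(a)}(K_i(z) v, w) = S^{(a)}(v, K_i(z) w)` for all `v, w ∈ V`. -/
theorem stmt_12 (n : ℕ) (hn : 3 ≤ n) (b : Fin n → Fin 2 → ℂ)
    (hd : ∀ i j : Fin n, i ≠ j → dd2 b i j ≠ 0)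
    (a : Fin n → ℂ) (ha : ∀ j, a j ≠ 0) (hA : (∑ j, a j) ≠ 0)
    (z : Fin n → ℂ)
    (hz : ∀ i j k : Fin n, i ≠ j → i ≠ k → j ≠ k → ff2 b z i j k ≠ 0)
    (i : Fin n) :
    (∀ x ∈ singV2 n a, K2 a b z i x ∈ singV2 n a) ∧
    (∀ x ∈ skewV2 n, ∀ y ∈ skewV2 n,
      S2 a (K2 a b z i x) y = S2 a x (K2 a b z i y)) :=
  stmt_12_general n b a z i
end

section
/- Let q(z) = (1/|a|²) Σ' (f_{i,j,m}(z)²/(d_{i,j} d_{j,m} d_{m,i})) v_{i,j}, where m ∈ {1,…,n} is fixed and Σ' is over pairs i < j with m ∉ {i,j}. Then for every z ∈ ℂ^n, the potential function of first kind P(z) = S^{(a)}(q(z), q(z)) satisfies P(z) = Σ_{1 ≤ i < j < k ≤ n} (a_i a_j a_k / |a|⁵) · f_{i,j,k}(z)⁴/(d_{i,j}² d_{j,k}² d_{k,i}²). -/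
open Finset

/-- The period map
`q(z) = (1/|a|²) ∑'_{i<j, m∉{i,j}} (f_{i,j,m}(z)²/(d_{i,j} d_{j,m} d_{m,i})) v_{i,j}`. -/
noncomputable def qmap2 {n : ℕ} (a : Fin n → ℂ) (b : Fin n → Fin 2 → ℂ) (m : Fin n)
    (z : Fin n → ℂ) : Fin n → Fin n → ℂ :=
  ((∑ j, a j) ^ 2)⁻¹ • ∑ i, ∑ j ∈ Finset.univ.filter (fun j => i < j ∧ i ≠ m ∧ j ≠ m),
    (ff2 b z i j m ^ 2 / (dd2 b i j * dd2 b j m * dd2 b m i)) • vv2 a i j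

/-!
Put `g(i,j,k) = f_{i,j,k}(z)² / (d_{i,j} d_{j,k} d_{k,i})`. It is alternating and, by a rational
identity in the `b_i`, a cocycle: `g(q,k,l) - g(p,k,l) + g(p,q,l) - g(p,q,k) = 0`. Contracting
with `a` gives `Q(p,q) = ∑_k a_k g(p,q,k)`; the cocycle identity shows that the entries of `q(z)`
are `Q(p,q)/|a|³` whatever `m` is, that `|a| g(p,q,k) = Q(p,q) + Q(q,k) + Q(k,p)`, and that
`∑_q a_q Q(p,q) = 0`. Squaring the middle identity and summing against `a_p a_q a_k`, the cross
terms vanish by the last one and each square contributes `|a| ∑ a_p a_q Q(p,q)²`; this is the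
theorem once full sums are converted into sums over increasing indices.
-/

section OrderedSums

variable {ι M : Type*} [Fintype ι] [AddCommMonoid M]

theorem sum_sum_sum_rotate (F : ι → ι → ι → M) :
    ∑ i, ∑ j, ∑ k, F j k i = ∑ i, ∑ j, ∑ k, F i j k :=
  sum_comm.trans (sum_congr rfl fun _ _ => sum_comm)

variable [LinearOrder ι]

theorem sum_sum_eq_two_nsmul_sum_lt (h : ι → ι → M) (hswap : ∀ i j, h j i = h i j)
    (hself : ∀ i, h i i = 0) :
    ∑ i, ∑ j, h i j = 2 • ∑ i, ∑ j with i < j, h i j := by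
  have hsplit : ∀ i j, h i j = (if i < j then h i j else 0) + (if j < i then h j i else 0) := by
    intro i j
    rcases lt_trichotomy i j with hij | rfl | hij
    · simp [hij, hij.not_gt]
    · simp [hself]
    · simp [hij, hij.not_gt, hswap]
  simp only [sum_filter]
  rw [two_nsmul]
  conv_rhs => enter [2]; rw [sum_comm]
  simp_rw [← sum_add_distrib, ← hsplit]

theorem sum_sum_sum_eq_six_nsmul_sum_lt_lt (h : ι → ι → ι → M)
    (hswap₁₂ : ∀ i j k, h j i k = h i j k) (hswap₂₃ : ∀ i j k, h i k j = h i j k)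
    (hself : ∀ i k, h i i k = 0) :
    ∑ i, ∑ j, ∑ k, h i j k = 6 • ∑ i, ∑ j with i < j, ∑ k with j < k, h i j k := by
  set t : ι → ι → ι → M := fun i j k => if i < j ∧ j < k then h i j k else 0 with ht
  have hself₂₃ : ∀ i j, h i j j = 0 := fun i j => by rw [hswap₁₂, ← hswap₂₃, hself]
  have hself₁₃ : ∀ i j, h i j i = 0 := fun i j => by rw [hswap₂₃, hself]
  have hsplit : ∀ i j k,
      h i j k = t i j k + t i k j + t j i k + t j k i + t k i j + t k j i := by
    intro i j k
    rcases lt_trichotomy i j with hij | hij | hij <;>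
    rcases lt_trichotomy j k with hjk | hjk | hjk <;>
    rcases lt_trichotomy i k with hik | hik | hik <;>
    first
    | (exfalso; order)
    | simp [t, *, lt_asymm]
  have hsorted : ∑ i, ∑ j with i < j, ∑ k with j < k, h i j k = ∑ i, ∑ j, ∑ k, t i j k := by
    simp only [ht, sum_filter, ite_and, ite_sum_zero]
  have hperm₂₃ : ∑ i, ∑ j, ∑ k, t i k j = ∑ i, ∑ j, ∑ k, t i j k :=
    sum_congr rfl fun _ _ => sum_comm
  have hperm₁₂ : ∑ i, ∑ j, ∑ k, t j i k = ∑ i, ∑ j, ∑ k, t i j k := sum_comm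
  have hrot : ∑ i, ∑ j, ∑ k, t j k i = ∑ i, ∑ j, ∑ k, t i j k := sum_sum_sum_rotate t
  have hrot₂ : ∑ i, ∑ j, ∑ k, t k i j = ∑ i, ∑ j, ∑ k, t i j k := (sum_sum_sum_rotate _).symm
  have hrev : ∑ i, ∑ j, ∑ k, t k j i = ∑ i, ∑ j, ∑ k, t i j k :=
    (sum_congr rfl fun _ _ => sum_comm).trans hrot
  rw [hsorted]
  simp only [hsplit, sum_add_distrib]
  rw [hperm₂₃, hperm₁₂, hrot, hrot₂, hrev]
  abel

end OrderedSums

section AlternatingCocycle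

variable {R ι : Type*} [CommRing R] [Fintype ι]

def contractLast (a : ι → R) (g : ι → ι → ι → R) (p q : ι) : R :=
  ∑ k, a k * g p q k

variable (a : ι → R) {g : ι → ι → ι → R}

theorem sum_sum_eq_zero_of_swap [IsAddTorsionFree R] {t : ι → ι → R}
    (ht : ∀ i j, t j i = -t i j) : ∑ i, ∑ j, t i j = 0 := by
  rw [← self_eq_neg]
  calc ∑ i, ∑ j, t i j = ∑ i, ∑ j, t j i := sum_comm
    _ = -∑ i, ∑ j, t i j := by
      simp only [← sum_neg_distrib]
      exact sum_congr rfl fun i _ => sum_congr rfl fun j _ => ht i j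

theorem contractLast_swap (hswap₁₂ : ∀ i j k, g j i k = -g i j k) (p q : ι) :
    contractLast a g q p = -contractLast a g p q := by
  simp only [contractLast, hswap₁₂ p q, mul_neg, sum_neg_distrib]

theorem contractLast_self [IsAddTorsionFree R] (hswap₁₂ : ∀ i j k, g j i k = -g i j k) (p : ι) :
    contractLast a g p p = 0 :=
  self_eq_neg.mp (contractLast_swap a hswap₁₂ p p)

theorem sum_mul_contractLast_eq_zero [IsAddTorsionFree R] (hswap₂₃ : ∀ i j k, g i k j = -g i j k)
    (p : ι) :
    ∑ q, a q * contractLast a g p q = 0 := by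
  simp only [contractLast, mul_sum]
  exact sum_sum_eq_zero_of_swap fun q k => by rw [hswap₂₃]; ring

theorem contractLast_eq_of_cocycle
    (hcocycle : ∀ p q k l, g q k l - g p k l + g p q l - g p q k = 0) (p q m : ι) :
    contractLast a g p q =
      (∑ i, a i) * g p q m + ∑ k, a k * g q k m - ∑ k, a k * g p k m := by
  have hk : ∀ k, a k * g p q k = a k * g q k m - a k * g p k m + a k * g p q m := fun k => by
    linear_combination -a k * hcocycle p q k m
  simp only [contractLast, hk, sum_add_distrib, sum_sub_distrib, ← sum_mul]
  ring

theorem sum_mul_eq_contractLast_add (hswap₁₂ : ∀ i j k, g j i k = -g i j k)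
    (hcocycle : ∀ p q k l, g q k l - g p k l + g p q l - g p q k = 0) (p q k : ι) :
    (∑ i, a i) * g p q k = contractLast a g p q + contractLast a g q k + contractLast a g k p := by
  simp only [contractLast, ← sum_add_distrib, sum_mul]
  refine sum_congr rfl fun l _ => ?_
  linear_combination -a l * (hcocycle p q k l + hswap₁₂ p k l)

theorem sq_sum_mul_sum_sq_eq_three_mul [IsAddTorsionFree R] (hswap₁₂ : ∀ i j k, g j i k = -g i j k)
    (hswap₂₃ : ∀ i j k, g i k j = -g i j k)
    (hcocycle : ∀ p q k l, g q k l - g p k l + g p q l - g p q k = 0) :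
    (∑ i, a i) ^ 2 * ∑ p, ∑ q, ∑ k, a p * a q * a k * g p q k ^ 2 =
      3 * (∑ i, a i) * ∑ p, ∑ q, a p * a q * contractLast a g p q ^ 2 := by
  set A := ∑ i, a i
  set Q := contractLast a g
  set G : ι → ι → ι → R := fun p q k => a p * a q * a k * (Q p q ^ 2 + 2 * Q p q * Q q k)
  have hpoint : ∀ p q k, A ^ 2 * (a p * a q * a k * g p q k ^ 2) = G p q k + G q k p + G k p q := by
    intro p q k
    have h := sum_mul_eq_contractLast_add a hswap₁₂ hcocycle p q k
    linear_combination a p * a q * a k * (A * g p q k + Q p q + Q q k + Q k p) * h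
  have hG : ∑ p, ∑ q, ∑ k, G p q k = A * ∑ p, ∑ q, a p * a q * Q p q ^ 2 := by
    rw [mul_sum]
    refine sum_congr rfl fun p _ => ?_
    rw [mul_sum]
    refine sum_congr rfl fun q _ => ?_
    have hrow := sum_mul_contractLast_eq_zero a hswap₂₃ q
    calc ∑ k, G p q k = a p * a q * Q p q * (Q p q * ∑ k, a k + 2 * ∑ k, a k * Q q k) := by
          simp only [G, mul_sum, ← sum_add_distrib]
          exact sum_congr rfl fun k _ => by ring
      _ = A * (a p * a q * Q p q ^ 2) := by rw [hrow]; ring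
  calc A ^ 2 * ∑ p, ∑ q, ∑ k, a p * a q * a k * g p q k ^ 2
      = ∑ p, ∑ q, ∑ k, (G p q k + G q k p + G k p q) := by simp only [mul_sum, hpoint]
    _ = 3 * ∑ p, ∑ q, ∑ k, G p q k := by
      simp only [sum_add_distrib, sum_sum_sum_rotate G,
        (sum_sum_sum_rotate fun i j k => G k i j).symm]
      ring
    _ = 3 * A * ∑ p, ∑ q, a p * a q * Q p q ^ 2 := by rw [hG]; ring

end AlternatingCocycle

theorem sum_lt_contractLast_sq_eq {K ι : Type*} [Field K] [CharZero K] [Fintype ι] [LinearOrder ι]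
    (a : ι → K) {g : ι → ι → ι → K} (hswap₁₂ : ∀ i j k, g j i k = -g i j k)
    (hswap₂₃ : ∀ i j k, g i k j = -g i j k)
    (hcocycle : ∀ p q k l, g q k l - g p k l + g p q l - g p q k = 0) (hA : ∑ i, a i ≠ 0) :
    ∑ i, ∑ j with i < j, a i * a j * contractLast a g i j ^ 2 =
      (∑ i, a i) * ∑ i, ∑ j with i < j, ∑ k with j < k, a i * a j * a k * g i j k ^ 2 := by
  have hpairs := sum_sum_eq_two_nsmul_sum_lt (fun p q => a p * a q * contractLast a g p q ^ 2)
    (fun p q => by rw [contractLast_swap a hswap₁₂]; ring)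
    (fun p => by rw [contractLast_self a hswap₁₂]; ring)
  have htriples := sum_sum_sum_eq_six_nsmul_sum_lt_lt
    (fun p q k => a p * a q * a k * g p q k ^ 2)
    (fun p q k => by rw [hswap₁₂]; ring) (fun p q k => by rw [hswap₂₃]; ring)
    (fun p k => by rw [self_eq_neg.mp (hswap₁₂ p p k)]; ring)
  have hkey := sq_sum_mul_sum_sq_eq_three_mul a hswap₁₂ hswap₂₃ hcocycle
  rw [hpairs, htriples, nsmul_eq_mul, nsmul_eq_mul] at hkey
  exact mul_left_cancel₀ (mul_ne_zero (by norm_num : (6 : K) ≠ 0) hA) (by linear_combination -hkey)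

section Coordinates

variable {n : ℕ} (a : Fin n → ℂ)

theorem sum_F2_right_apply (i p q : Fin n) :
    ∑ k, F2 n i k p q = (if p = i then 1 else 0) - (if q = i then 1 else 0) := by
  simp [F2, sum_sub_distrib, ite_and]

theorem sum_F2_left_apply (j p q : Fin n) :
    ∑ l, F2 n l j p q = (if q = j then 1 else 0) - (if p = j then 1 else 0) := by
  simp [F2, sum_sub_distrib, ite_and]

theorem vv2_swap (i j : Fin n) : vv2 a j i = -vv2 a i j := by
  rcases eq_or_ne i j with rfl | hij
  · simp [vv2]
  ext p q
  simp only [vv2, hij, hij.symm, if_false, Pi.sub_apply, Pi.smul_apply, Pi.neg_apply,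
    Finset.sum_apply, smul_eq_mul, sum_F2_right_apply, sum_F2_left_apply]
  simp only [F2]
  ring

theorem mul_vv2_apply {c : Fin n → Fin n → ℂ} (hc : ∀ i, c i i = 0) (i j p q : Fin n) :
    c i j * vv2 a i j p q = c i j * (F2 n i j p q
      - a j / (∑ m, a m) * ((if p = i then 1 else 0) - (if q = i then 1 else 0))
      - a i / (∑ m, a m) * ((if q = j then 1 else 0) - (if p = j then 1 else 0))) := by
  rcases eq_or_ne i j with rfl | hij
  · simp [hc]
  · simp [vv2, hij, sum_F2_right_apply, sum_F2_left_apply]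

theorem sum_sum_mul_vv2_apply {c : Fin n → Fin n → ℂ} (hc : ∀ i j, c j i = -c i j) (p q : Fin n) :
    ∑ i, ∑ j, c i j * vv2 a i j p q =
      2 * (c p q - ((∑ j, a j * c p j) - ∑ j, a j * c q j) / ∑ m, a m) := by
  have hself : ∀ i, c i i = 0 := fun i => self_eq_neg.mp (hc i i)
  have hcol : ∀ x y, ∑ k, c k x * (a k / ∑ m, a m) - ∑ k, c k y * (a k / ∑ m, a m)
      = ((∑ k, a k * c y k) - ∑ k, a k * c x k) / ∑ m, a m := by
    intro x y
    simp only [hc _ x, hc _ y, sum_div, ← sum_sub_distrib]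
    exact sum_congr rfl fun k _ => by ring
  have hrow : ∀ x, ∑ k, c x k * (a k / ∑ m, a m) = (∑ k, a k * c x k) / ∑ m, a m := fun x => by
    rw [sum_div]; exact sum_congr rfl fun k _ => by ring
  simp only [mul_vv2_apply a hself, F2]
  simp only [ite_and, mul_sub, mul_ite, mul_one, mul_zero, sum_sub_distrib, sum_ite_irrel,
    sum_ite_eq, mem_univ, if_true, sum_const_zero]
  rw [hc p q, hcol, hrow, hrow]
  ring

end Coordinates

/-- The `g` above; as `d_{i,i} = 0` and `x / 0 = 0`, it vanishes when two indices coincide. -/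
noncomputable def fRatio {n : ℕ} (b : Fin n → Fin 2 → ℂ) (z : Fin n → ℂ) (i j k : Fin n) : ℂ :=
  ff2 b z i j k ^ 2 / (dd2 b i j * dd2 b j k * dd2 b k i)

section Period

variable {n : ℕ} (b : Fin n → Fin 2 → ℂ) (z : Fin n → ℂ)

theorem dd2_self (i : Fin n) : dd2 b i i = 0 := by
  rw [dd2]; ring

theorem fRatio_swap₁₂ (i j k : Fin n) : fRatio b z j i k = -fRatio b z i j k := by
  rw [fRatio, fRatio, ← div_neg]
  congr 1 <;> simp only [ff2, dd2] <;> ring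

theorem fRatio_swap₂₃ (i j k : Fin n) : fRatio b z i k j = -fRatio b z i j k := by
  rw [fRatio, fRatio, ← div_neg]
  congr 1 <;> simp only [ff2, dd2] <;> ring

theorem fRatio_rotate (i j k : Fin n) : fRatio b z j k i = fRatio b z i j k := by
  unfold fRatio ff2; ring

theorem fRatio_self₁₂ (i k : Fin n) : fRatio b z i i k = 0 := by simp [fRatio, dd2_self]

theorem fRatio_self₂₃ (i j : Fin n) : fRatio b z i j j = 0 := by simp [fRatio, dd2_self]

theorem fRatio_self₁₃ (i j : Fin n) : fRatio b z i j i = 0 := by simp [fRatio, dd2_self]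

theorem fRatio_cocycle_of_ne (hd : ∀ i j : Fin n, i ≠ j → dd2 b i j ≠ 0) {p q k l : Fin n}
    (hpq : p ≠ q) (hpk : p ≠ k) (hpl : p ≠ l) (hqk : q ≠ k) (hql : q ≠ l) (hkl : k ≠ l) :
    fRatio b z q k l - fRatio b z p k l + fRatio b z p q l - fRatio b z p q k = 0 := by
  unfold fRatio
  field_simp (disch := exact hd _ _ (by first | assumption | exact Ne.symm ‹_›))
  unfold ff2 dd2
  ring

theorem fRatio_cocycle (hd : ∀ i j : Fin n, i ≠ j → dd2 b i j ≠ 0) (p q k l : Fin n) :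
    fRatio b z q k l - fRatio b z p k l + fRatio b z p q l - fRatio b z p q k = 0 := by
  by_cases hpq : p = q
  · simp [hpq, fRatio_self₁₂]
  by_cases hpk : p = k
  · simp [hpk, fRatio_self₁₂, fRatio_self₁₃, fRatio_swap₁₂ b z k q l]
  by_cases hpl : p = l
  · simp [hpl, fRatio_self₁₃, fRatio_rotate]
  by_cases hqk : q = k
  · simp [hqk, fRatio_self₁₂, fRatio_self₂₃]
  by_cases hql : q = l
  · simp [hql, fRatio_self₁₃, fRatio_self₂₃, fRatio_swap₂₃ b z p l k]
  by_cases hkl : k = l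
  · simp [hkl, fRatio_self₂₃]
  exact fRatio_cocycle_of_ne b z hd hpq hpk hpl hqk hql hkl

variable (a : Fin n → ℂ)

theorem qmap2_apply (hd : ∀ i j : Fin n, i ≠ j → dd2 b i j ≠ 0) (hA : ∑ j, a j ≠ 0)
    (m : Fin n) (p q : Fin n) :
    qmap2 a b m z p q = ((∑ j, a j) ^ 3)⁻¹ * contractLast a (fRatio b z) p q := by
  set c : Fin n → Fin n → ℂ := fun i j => fRatio b z i j m
  have hc : ∀ i j, c j i = -c i j := fun i j => fRatio_swap₁₂ b z i j m
  have hdrop : ∀ i, ∑ j with i < j ∧ i ≠ m ∧ j ≠ m, fRatio b z i j m * vv2 a i j p q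
      = ∑ j with i < j, c i j * vv2 a i j p q := by
    intro i
    simp only [sum_filter]
    refine sum_congr rfl fun j _ => ?_
    rcases eq_or_ne i m with rfl | him
    · simp [c, fRatio_self₁₃]
    rcases eq_or_ne j m with rfl | hjm
    · simp [c, fRatio_self₂₃]
    · simp [c, him, hjm]
  have hpairs := sum_sum_eq_two_nsmul_sum_lt (fun i j => c i j * vv2 a i j p q)
    (fun i j => by simp only [hc i j, vv2_swap a i j, Pi.neg_apply]; ring)
    (fun i => by simp [vv2])
  rw [sum_sum_mul_vv2_apply a hc, nsmul_eq_mul, Nat.cast_ofNat] at hpairs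
  calc qmap2 a b m z p q
      = ((∑ j, a j) ^ 2)⁻¹ * ∑ i, ∑ j with i < j, c i j * vv2 a i j p q := by
        simp only [qmap2, Pi.smul_apply, Finset.sum_apply, smul_eq_mul]
        exact congrArg _ (sum_congr rfl fun i _ => hdrop i)
    _ = ((∑ j, a j) ^ 3)⁻¹ * contractLast a (fRatio b z) p q := by
        rw [← mul_left_cancel₀ two_ne_zero hpairs,
          contractLast_eq_of_cocycle a (fRatio_cocycle b z hd) p q m]
        field_simp
        ring

theorem S2_qmap2 (hd : ∀ i j : Fin n, i ≠ j → dd2 b i j ≠ 0) (hA : ∑ j, a j ≠ 0) (m : Fin n) :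
    S2 a (qmap2 a b m z) (qmap2 a b m z) = ((∑ j, a j) ^ 6)⁻¹ *
      ∑ i, ∑ j with i < j, a i * a j * contractLast a (fRatio b z) i j ^ 2 := by
  simp only [S2, qmap2_apply b z a hd hA, mul_sum]
  exact sum_congr rfl fun i _ => sum_congr rfl fun j _ => by ring

end Period

theorem stmt_15_general (n : ℕ) (b : Fin n → Fin 2 → ℂ)
    (hd : ∀ i j : Fin n, i ≠ j → dd2 b i j ≠ 0)
    (a : Fin n → ℂ) (hA : (∑ j, a j) ≠ 0)
    (m : Fin n) (z : Fin n → ℂ) :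
    S2 a (qmap2 a b m z) (qmap2 a b m z) =
      ∑ i, ∑ j ∈ Finset.univ.filter (fun j => i < j),
        ∑ k ∈ Finset.univ.filter (fun k => j < k),
          (a i * a j * a k / (∑ m', a m') ^ 5) *
            (ff2 b z i j k ^ 4 / (dd2 b i j ^ 2 * dd2 b j k ^ 2 * dd2 b k i ^ 2)) := by
  have hrhs : ∑ i, ∑ j with i < j, ∑ k with j < k, (a i * a j * a k / (∑ j, a j) ^ 5) *
        (ff2 b z i j k ^ 4 / (dd2 b i j ^ 2 * dd2 b j k ^ 2 * dd2 b k i ^ 2)) = ((∑ j, a j) ^ 5)⁻¹ *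
      ∑ i, ∑ j with i < j, ∑ k with j < k, a i * a j * a k * fRatio b z i j k ^ 2 := by
    simp only [fRatio, div_pow, mul_sum]
    exact sum_congr rfl fun i _ => sum_congr rfl fun j _ => sum_congr rfl fun k _ => by ring
  rw [S2_qmap2 b z a hd hA, hrhs, sum_lt_contractLast_sq_eq a (fRatio_swap₁₂ b z)
    (fRatio_swap₂₃ b z) (fRatio_cocycle b z hd) hA]
  field_simp

/-- The potential function of first kind `P(z) = S^{(a)}(q(z), q(z))`
satisfies `P(z) = ∑_{i<j<k} (a_i a_j a_k/|a|⁵) f_{i,j,k}(z)⁴/(d_{i,j}² d_{j,k}² d_{k,i}²)`. -/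
theorem stmt_15 (n : ℕ) (hn : 3 ≤ n) (b : Fin n → Fin 2 → ℂ)
    (hd : ∀ i j : Fin n, i ≠ j → dd2 b i j ≠ 0)
    (a : Fin n → ℂ) (ha : ∀ j, a j ≠ 0) (hA : (∑ j, a j) ≠ 0)
    (m : Fin n) (z : Fin n → ℂ) :
    S2 a (qmap2 a b m z) (qmap2 a b m z) =
      ∑ i, ∑ j ∈ Finset.univ.filter (fun j => i < j),
        ∑ k ∈ Finset.univ.filter (fun k => j < k),
          (a i * a j * a k / (∑ m', a m') ^ 5) *
            (ff2 b z i j k ^ 4 / (dd2 b i j ^ 2 * dd2 b j k ^ 2 * dd2 b k i ^ 2)) :=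
  stmt_15_general n b hd a hA m z
end

section
/- The contravariant form takes the following values on the vectors v_{i_1,…,i_k}: S^{(a)}(v_{i_1,…,i_k}, v_{j_1,…,j_k}) = 0 whenever |{i_1,…,i_k} ∩ {j_1,…,j_k}| < k−1; S^{(a)}(v_{i_1,…,i_{k−1},i_k}, v_{i_1,…,i_{k−1},i_{k+1}}) = −(a_{i_1} ⋯ a_{i_{k+1}})/|a| for pairwise distinct i_1,…,i_{k+1}; and S^{(a)}(v_{i_1,…,i_k}, v_{i_1,…,i_k}) = (Σ_{j ∉ {i_1,…,i_k}} a_j)(a_{i_1} ⋯ a_{i_k})/|a| for pairwise distinct i_1,…,i_k. -/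
open Finset

attribute [local instance] Classical.propDecidable

/-- The basis vector `F_{t(0),…,t(k-1)}` of `V` in the coordinate model: `V` is realized
inside the space of functions `(Fin k → Fin n) → ℂ`, and `F t` is the alternating
indicator of the tuple `t`.  This realizes the antisymmetry relations
`F_{i_{σ(1)},…,i_{σ(k)}} = sgn(σ) F_{i_1,…,i_k}` and `F = 0` on tuples with a repeated
index. -/
noncomputable def Fk {n k : ℕ} (t : Fin k → Fin n) : (Fin k → Fin n) → ℂ :=
  fun s => ∑ σ : Equiv.Perm (Fin k), ((Equiv.Perm.sign σ : ℤ) : ℂ) *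
    (if t = s ∘ σ then 1 else 0)

/-- The vector
`v_{i_1,…,i_k} = F_{i_1,…,i_k} − ∑_{m} (a_{i_m}/|a|) ∑_{j} F_{i_1,…,i_{m-1},j,i_{m+1},…,i_k}`
for pairwise distinct `i_1,…,i_k`, and `v = 0` on tuples with a repeated index. -/
noncomputable def vk {n k : ℕ} (a : Fin n → ℂ) (t : Fin k → Fin n) :
    (Fin k → Fin n) → ℂ :=
  if Function.Injective t then
    Fk t - ∑ m : Fin k, (a (t m) / ∑ j, a j) • ∑ j : Fin n, Fk (Function.update t m j)
  else 0

/-- The contravariant form `S^{(a)}`: distinct (increasing) basis vectors are orthogonal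
and `S^{(a)}(F_{i_1,…,i_k}, F_{i_1,…,i_k}) = a_{i_1} ⋯ a_{i_k}`. -/
noncomputable def Sk {n k : ℕ} (a : Fin n → ℂ) (x y : (Fin k → Fin n) → ℂ) : ℂ :=
  ∑ t ∈ Finset.univ.filter (fun t : Fin k → Fin n => StrictMono t),
    (∏ m, a (t m)) * x t * y t

/-!
In the coordinate model `F_w(s) = det (δ_{s_i, w_j})`, and summing `F_{…,j,…}` over `j` turns
one column of this matrix into the all-ones vector. The matrix determinant lemma then gives
`v_u(s) = det (δ_{s_i, u_j} - a_{u_j} / |a|)`. Contracting one row of this matrix against the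
weights `a` kills it, so `v_u` is orthogonal to every `∑_j F_{…,j,…}`, and therefore
`S(v_t, v_u) = a_{t_1} ⋯ a_{t_k} · v_u(t)`. The three values are evaluations of `v_u(t)`: on the
diagonal `δ` is the identity; if `u_j ∉ {t_1, …, t_k}` the `j`-th column of `δ` vanishes and a
single Cramer term survives, which vanishes too once a second column does.
-/

namespace Matrix

variable {ι R : Type*} [Fintype ι] [DecidableEq ι] [CommRing R]

theorem det_updateRow_finset_sum {α : Type*} (M : Matrix ι ι R) (i : ι) (t : Finset α)
    (g : α → ι → R) :
    (M.updateRow i (∑ x ∈ t, g x)).det = ∑ x ∈ t, (M.updateRow i (g x)).det :=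
  detRowAlternating.map_update_sum t i g M

theorem det_updateCol_finset_sum {α : Type*} (M : Matrix ι ι R) (j : ι) (t : Finset α)
    (g : α → ι → R) :
    (M.updateCol j (∑ x ∈ t, g x)).det = ∑ x ∈ t, (M.updateCol j (g x)).det := by
  rw [← det_transpose, ← updateRow_transpose, det_updateRow_finset_sum]
  simp_rw [updateRow_transpose, det_transpose]

theorem det_updateCol_add_vecMulVec_of_apply_eq_zero (M : Matrix ι ι R) (u v : ι → R) {j : ι}
    (hv : v j = 0) : ((M + vecMulVec u v).updateCol j u).det = (M.updateCol j u).det := by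
  have hfactor : (M + vecMulVec u v).updateCol j u =
      M.updateCol j u * (1 + vecMulVec (Pi.single j 1) v) := by
    rw [Matrix.mul_add, Matrix.mul_one, mul_vecMulVec, mulVec_single_one]
    ext i l
    rcases eq_or_ne l j with rfl | hl
    · simp [vecMulVec_apply, hv]
    · simp [vecMulVec_apply, updateCol_ne hl]
  rw [hfactor, det_mul, vecMulVec_eq Unit, det_one_add_replicateCol_mul_replicateRow]
  simp [hv]

/-- The matrix determinant lemma, without invertibility of `M`. -/
theorem det_add_vecMulVec (M : Matrix ι ι R) (u v : ι → R) :
    (M + vecMulVec u v).det = M.det + v ⬝ᵥ cramer M u := by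
  suffices h : ∀ S : Finset ι, (M + vecMulVec u (fun j => if j ∈ S then v j else 0)).det =
      M.det + ∑ j ∈ S, v j * (M.updateCol j u).det by
    simpa [dotProduct, cramer_apply] using h Finset.univ
  intro S
  induction S using Finset.induction_on with
  | empty => simp [← Pi.zero_def]
  | insert j S hj ih =>
    set P := M + vecMulVec u (fun i => if i ∈ S then v i else 0)
    have hcol : M + vecMulVec u (fun i => if i ∈ insert j S then v i else 0) =
        P.updateCol j ((fun i => P i j) + v j • u) := by
      ext i l
      rcases eq_or_ne l j with rfl | hl
      · simp [P, vecMulVec_apply, hj, mul_comm]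
      · simp [P, vecMulVec_apply, hl]
    rw [hcol, det_updateCol_add, updateCol_eq_self, det_updateCol_smul, ih,
      det_updateCol_add_vecMulVec_of_apply_eq_zero _ _ _ (by simp [hj]), Finset.sum_insert hj]
    ring

end Matrix

open Matrix Equiv

def incidenceMatrix (R : Type*) [Zero R] [One R] {ι α : Type*} [DecidableEq α] (s w : ι → α) :
    Matrix ι ι R :=
  Matrix.of fun i j => if s i = w j then 1 else 0

theorem strictMono_comp_iff_eq_sort {α : Type*} [LinearOrder α] {k : ℕ} {w : Fin k → α}
    (hw : Function.Injective w) (σ : Perm (Fin k)) :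
    StrictMono (w ∘ σ) ↔ σ = Tuple.sort w := by
  refine ⟨fun h => Tuple.eq_sort_iff.2 ⟨h.monotone, fun i j hij heq => ?_⟩, ?_⟩
  · exact absurd (h.injective heq) hij.ne
  · rintro rfl
    exact (Tuple.monotone_sort w).strictMono_of_injective (hw.comp (Equiv.injective _))

theorem apply_eq_zero_of_not_injective {ι α R : Type*} [Fintype ι] [DecidableEq ι] [Ring R]
    [IsAddTorsionFree R] {y : (ι → α) → R}
    (hy : ∀ (s : ι → α) (π : Perm ι), y (s ∘ π) = Perm.sign π * y s) {s : ι → α}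
    (hs : ¬ Function.Injective s) : y s = 0 := by
  obtain ⟨i, j, hij, hne⟩ : ∃ i j, s i = s j ∧ i ≠ j := by
    simpa [Function.Injective] using hs
  have hswap : s ∘ swap i j = s := by
    ext l
    rcases eq_or_ne l i with rfl | hli
    · simp [hij]
    rcases eq_or_ne l j with rfl | hlj
    · simp [hij]
    · simp [swap_apply_of_ne_of_ne hli hlj]
  have := hy s (swap i j)
  rw [hswap, Perm.sign_swap hne] at this
  exact self_eq_neg.mp (by simpa using this)

theorem injective_update_of_notMem_range {α β : Type*} [DecidableEq α] {t : α → β}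
    (ht : Function.Injective t) (m : α) {q : β} (hq : q ∉ Set.range t) :
    Function.Injective (Function.update t m q) := by
  intro x y hxy
  simp only [Function.update_apply] at hxy
  split_ifs at hxy with hx hy hy
  · exact hx.trans hy.symm
  · exact absurd ⟨y, hxy.symm⟩ hq
  · exact absurd ⟨x, hxy⟩ hq
  · exact ht hxy

section Contravariant

variable {n k : ℕ}

theorem Fk_apply_eq_det (w s : Fin k → Fin n) : Fk w s = (incidenceMatrix ℂ s w).det := by
  rw [Fk, det_apply]
  refine Finset.sum_congr rfl fun σ _ => ?_
  simp [incidenceMatrix, Finset.prod_boole, funext_iff, eq_comm, Units.smul_def]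

theorem Fk_comm (w s : Fin k → Fin n) : Fk w s = Fk s w := by
  rw [Fk_apply_eq_det, Fk_apply_eq_det, ← det_transpose]
  congr 1
  ext i j
  simp [incidenceMatrix, eq_comm]

theorem sum_Fk_update_apply (w s : Fin k → Fin n) (m : Fin k) :
    ∑ j, Fk (Function.update w m j) s = ((incidenceMatrix ℂ s w).updateCol m 1).det := by
  have hcol : ∀ j, incidenceMatrix ℂ s (Function.update w m j) =
      (incidenceMatrix ℂ s w).updateCol m (fun i => if s i = j then 1 else 0) := by
    intro j
    ext i l
    rcases eq_or_ne l m with rfl | hl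
    · simp [incidenceMatrix]
    · simp [incidenceMatrix, hl]
  simp_rw [Fk_apply_eq_det, hcol, ← det_updateCol_finset_sum]
  congr 2
  ext i
  simp

theorem vk_apply_eq_det_add_dotProduct_cramer (a : Fin n → ℂ) {u : Fin k → Fin n}
    (hu : Function.Injective u) (s : Fin k → Fin n) :
    vk a u s = (incidenceMatrix ℂ s u).det +
      (fun l => -(a (u l) / ∑ j, a j)) ⬝ᵥ cramer (incidenceMatrix ℂ s u) 1 := by
  simp [vk, hu, Fk_apply_eq_det, ← sum_Fk_update_apply, dotProduct, cramer_apply,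
    sub_eq_add_neg]

theorem vk_apply_eq_det (a : Fin n → ℂ) {u : Fin k → Fin n} (hu : Function.Injective u)
    (s : Fin k → Fin n) :
    vk a u s = (incidenceMatrix ℂ s u + vecMulVec 1 (fun l => -(a (u l) / ∑ j, a j))).det := by
  rw [det_add_vecMulVec, vk_apply_eq_det_add_dotProduct_cramer a hu]

theorem vk_comp_perm (a : Fin n → ℂ) (u s : Fin k → Fin n) (π : Perm (Fin k)) :
    vk a u (s ∘ π) = Perm.sign π * vk a u s := by
  by_cases hu : Function.Injective u
  · rw [vk_apply_eq_det a hu, vk_apply_eq_det a hu, ← det_permute]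
    rfl
  · simp [vk, hu]

/-- In the determinant formula for `v_u` the contracted row becomes
`a (u l) - |a| · a (u l) / |a| = 0`. -/
theorem sum_mul_vk_update_eq_zero {a : Fin n → ℂ} (hA : ∑ j, a j ≠ 0) (u s : Fin k → Fin n)
    (m : Fin k) : ∑ j, a j * vk a u (Function.update s m j) = 0 := by
  by_cases hu : Function.Injective u
  swap
  · simp [vk, hu]
  set M := incidenceMatrix ℂ s u + vecMulVec 1 (fun l => -(a (u l) / ∑ j, a j))
  set r : Fin n → Fin k → ℂ := fun j l => (if j = u l then 1 else 0) - a (u l) / ∑ j, a j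
  have hrow : ∀ j, a j * vk a u (Function.update s m j) = (M.updateRow m (a j • r j)).det := by
    intro j
    rw [vk_apply_eq_det a hu, det_updateRow_smul]
    congr 2
    ext i l
    rcases eq_or_ne i m with rfl | hi
    · simp [M, r, incidenceMatrix, sub_eq_add_neg]
    · simp [M, incidenceMatrix, hi]
  have hcontract : ∑ j, a j • r j = 0 := by
    ext l
    simp [r, mul_sub, ← Finset.sum_mul, mul_div_cancel₀ _ hA]
  simp_rw [hrow, ← det_updateRow_finset_sum, hcontract]
  exact det_eq_zero_of_row_eq_zero m (by simp)

theorem Sk_Fk_left (a : Fin n → ℂ) (w : Fin k → Fin n) {y : (Fin k → Fin n) → ℂ}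
    (hy : ∀ (s : Fin k → Fin n) (π : Perm (Fin k)), y (s ∘ π) = Perm.sign π * y s) :
    Sk a (Fk w) y = (∏ l, a (w l)) * y w := by
  have hterm : ∀ σ : Perm (Fin k),
      (Perm.sign σ : ℂ) * ((∏ l, a ((w ∘ σ) l)) * y (w ∘ σ)) = (∏ l, a (w l)) * y w := by
    intro σ
    rw [hy, Function.comp_def, Equiv.prod_comp σ (fun l => a (w l))]
    rcases Int.units_eq_one_or (Perm.sign σ) with h | h <;> simp [h]
  calc Sk a (Fk w) y
      = ∑ s ∈ Finset.univ.filter StrictMono, ∑ σ : Perm (Fin k),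
          if s = w ∘ σ then (Perm.sign σ : ℂ) * ((∏ l, a (s l)) * y s) else 0 := by
        refine Finset.sum_congr rfl fun s _ => ?_
        rw [Fk_comm, Fk, Finset.mul_sum, Finset.sum_mul]
        refine Finset.sum_congr rfl fun σ _ => ?_
        split_ifs <;> ring
    _ = ∑ σ : Perm (Fin k), if StrictMono (w ∘ σ) then (∏ l, a (w l)) * y w else 0 := by
        rw [Finset.sum_comm]
        refine Finset.sum_congr rfl fun σ _ => ?_
        rw [Finset.sum_ite_eq']
        simp only [Finset.mem_filter, Finset.mem_univ, true_and]
        exact if_congr Iff.rfl (hterm σ) rfl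
    _ = (∏ l, a (w l)) * y w := by
        by_cases hw : Function.Injective w
        · simp [strictMono_comp_iff_eq_sort hw]
        · have hmono : ∀ σ : Perm (Fin k), ¬ StrictMono (w ∘ σ) :=
            fun σ h => hw (h.injective.of_comp_right σ.surjective)
          simp [hmono, apply_eq_zero_of_not_injective hy hw]

noncomputable def skLeft (a : Fin n → ℂ) (y : (Fin k → Fin n) → ℂ) :
    ((Fin k → Fin n) → ℂ) →ₗ[ℂ] ℂ where
  toFun x := Sk a x y
  map_add' x x' := by simp [Sk, add_mul, mul_add, Finset.sum_add_distrib]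
  map_smul' c x := by simp [Sk, Finset.mul_sum, mul_assoc, mul_left_comm]

theorem Sk_vk_left {a : Fin n → ℂ} (hA : ∑ j, a j ≠ 0) {t : Fin k → Fin n}
    (ht : Function.Injective t) (u : Fin k → Fin n) :
    Sk a (vk a t) (vk a u) = (∏ l, a (t l)) * vk a u t := by
  have hFk : ∀ w, skLeft a (vk a u) (Fk w) = (∏ l, a (w l)) * vk a u w :=
    fun w => Sk_Fk_left a w (vk_comp_perm a u)
  have hslot : ∀ m, ∑ j, skLeft a (vk a u) (Fk (Function.update t m j)) = 0 := by
    intro m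
    have hprod : ∀ j, ∏ l, a (Function.update t m j l) =
        (∏ l ∈ Finset.univ.erase m, a (t l)) * a j := by
      intro j
      rw [← Finset.prod_erase_mul _ _ (Finset.mem_univ m), Function.update_self]
      congr 1
      exact Finset.prod_congr rfl fun l hl => by
        rw [Function.update_of_ne (Finset.ne_of_mem_erase hl)]
    simp_rw [hFk, hprod, mul_assoc, ← Finset.mul_sum, sum_mul_vk_update_eq_zero hA, mul_zero]
  have hvt : vk a t = Fk t - ∑ m, (a (t m) / ∑ j, a j) • ∑ j, Fk (Function.update t m j) := by
    rw [vk, if_pos ht]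
  change skLeft a (vk a u) (vk a t) = _
  simp_rw [hvt, map_sub, map_sum, map_smul, map_sum, hslot, smul_zero, Finset.sum_const_zero,
    sub_zero, hFk]

theorem incidenceMatrix_self {t : Fin k → Fin n} (ht : Function.Injective t) :
    incidenceMatrix ℂ t t = 1 := by
  ext i j
  simp [incidenceMatrix, one_apply, ht.eq_iff]

theorem vk_apply_self (a : Fin n → ℂ) {t : Fin k → Fin n} (ht : Function.Injective t) :
    vk a t t = 1 - ∑ l, a (t l) / ∑ j, a j := by
  simp [vk_apply_eq_det_add_dotProduct_cramer a ht, incidenceMatrix_self ht, cramer_one,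
    dotProduct_one, sub_eq_add_neg]

/-- Column `j` of the incidence matrix vanishes, so only the `j`-th Cramer term survives. -/
theorem vk_apply_of_apply_notMem_range (a : Fin n → ℂ) {t u : Fin k → Fin n}
    (hu : Function.Injective u) {j : Fin k} (hj : u j ∉ Set.range t) :
    vk a u t = -(a (u j) / ∑ j, a j) * ((incidenceMatrix ℂ t u).updateCol j 1).det := by
  have hzero : ∀ i, incidenceMatrix ℂ t u i j = 0 := fun i => by
    simpa [incidenceMatrix] using fun h => hj ⟨i, h⟩
  rw [vk_apply_eq_det_add_dotProduct_cramer a hu, det_eq_zero_of_column_eq_zero j hzero,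
    zero_add, dotProduct, Fintype.sum_eq_single j, cramer_apply]
  intro i hij
  rw [cramer_apply, det_eq_zero_of_column_eq_zero j (by simpa [updateCol_ne hij.symm]),
    mul_zero]

theorem vk_update_apply (a : Fin n → ℂ) {t : Fin k → Fin n} (ht : Function.Injective t)
    (m : Fin k) {q : Fin n} (hq : q ∉ Set.range t) :
    vk a (Function.update t m q) t = -(a q / ∑ j, a j) := by
  have hupd : (incidenceMatrix ℂ t (Function.update t m q)).updateCol m 1 = updateCol 1 m 1 := by
    ext i l
    rcases eq_or_ne l m with rfl | hl
    · simp
    · simp [incidenceMatrix, hl, one_apply, ht.eq_iff]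
  rw [vk_apply_of_apply_notMem_range a (injective_update_of_notMem_range ht m hq)
    (by rwa [Function.update_self]), hupd, ← cramer_apply, cramer_one]
  simp

theorem vk_apply_eq_zero_of_card_inter_lt (a : Fin n → ℂ) {t u : Fin k → Fin n}
    (hu : Function.Injective u)
    (hcard : (Finset.univ.image t ∩ Finset.univ.image u).card < k - 1) : vk a u t = 0 := by
  obtain ⟨j, hj, j', hj', hne⟩ := Finset.one_lt_card.1 <|
      show 1 < (Finset.univ.filter fun l => u l ∉ Set.range t).card by
    have himage : (Finset.univ.filter fun l => u l ∈ Set.range t).image u =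
        Finset.univ.image t ∩ Finset.univ.image u := by
      ext x
      simp only [Finset.mem_image, Finset.mem_filter, Finset.mem_univ, true_and,
        Finset.mem_inter, Set.mem_range]
      constructor
      · rintro ⟨l, ⟨i, hi⟩, rfl⟩
        exact ⟨⟨i, hi⟩, l, rfl⟩
      · rintro ⟨⟨i, hi⟩, l, rfl⟩
        exact ⟨l, ⟨i, hi⟩, rfl⟩
    have hsplit := Finset.card_filter_add_card_filter_not
      (s := Finset.univ) (fun l => u l ∈ Set.range t)
    rw [← himage, Finset.card_image_of_injective _ hu] at hcard
    simp only [Finset.card_univ, Fintype.card_fin] at hsplit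
    omega
  simp only [Finset.mem_filter, Finset.mem_univ, true_and] at hj hj'
  rw [vk_apply_of_apply_notMem_range a hu hj, det_eq_zero_of_column_eq_zero j', mul_zero]
  intro i
  simpa [updateCol_ne hne.symm, incidenceMatrix] using fun h => hj' ⟨i, h⟩

end Contravariant

theorem stmt_18_general (n k : ℕ)
    (a : Fin n → ℂ) (hA : (∑ j, a j) ≠ 0) :
    (∀ t u : Fin k → Fin n, Function.Injective t → Function.Injective u →
      ((Finset.univ.image t) ∩ (Finset.univ.image u)).card < k - 1 →
      Sk a (vk a t) (vk a u) = 0) ∧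
    (∀ t : Fin k → Fin n, Function.Injective t → ∀ m : Fin k, ∀ q : Fin n,
      q ∉ Set.range t →
      Sk a (vk a t) (vk a (Function.update t m q)) =
        -((∏ l, a (t l)) * a q) / (∑ j, a j)) ∧
    (∀ t : Fin k → Fin n, Function.Injective t →
      Sk a (vk a t) (vk a t) =
        (∑ j ∈ Finset.univ \ Finset.univ.image t, a j) * (∏ l, a (t l)) / (∑ j, a j)) := by
  refine ⟨fun t u ht hu hcard => ?_, fun t ht m q hq => ?_, fun t ht => ?_⟩
  · rw [Sk_vk_left hA ht, vk_apply_eq_zero_of_card_inter_lt a hu hcard, mul_zero]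
  · rw [Sk_vk_left hA ht, vk_update_apply a ht m hq]
    ring
  · have hcompl : ∑ j ∈ Finset.univ \ Finset.univ.image t, a j = ∑ j, a j - ∑ l, a (t l) := by
      rw [Finset.sum_sdiff_eq_sub (Finset.subset_univ _), Finset.sum_image fun _ _ _ _ h => ht h]
    rw [Sk_vk_left hA ht, vk_apply_self a ht, hcompl, ← Finset.sum_div]
    field_simp

/-- Values of the contravariant form on the vectors `v_{i_1,…,i_k}`:
zero if the index sets share fewer than `k−1` elements; `−(a_{i_1}⋯a_{i_{k+1}})/|a|` if the
tuples agree except in one position (with `k+1` distinct indices in total); and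
`(∑_{j ∉ {i_1,…,i_k}} a_j)(a_{i_1}⋯a_{i_k})/|a|` on the diagonal. -/
theorem stmt_18 (n k : ℕ) (hk : 1 ≤ k) (hkn : k < n)
    (a : Fin n → ℂ) (ha : ∀ j, a j ≠ 0) (hA : (∑ j, a j) ≠ 0) :
    (∀ t u : Fin k → Fin n, Function.Injective t → Function.Injective u →
      ((Finset.univ.image t) ∩ (Finset.univ.image u)).card < k - 1 →
      Sk a (vk a t) (vk a u) = 0) ∧
    (∀ t : Fin k → Fin n, Function.Injective t → ∀ m : Fin k, ∀ q : Fin n,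
      q ∉ Set.range t →
      Sk a (vk a t) (vk a (Function.update t m q)) =
        -((∏ l, a (t l)) * a q) / (∑ j, a j)) ∧
    (∀ t : Fin k → Fin n, Function.Injective t →
      Sk a (vk a t) (vk a t) =
        (∑ j ∈ Finset.univ \ Finset.univ.image t, a j) * (∏ l, a (t l)) / (∑ j, a j)) :=
  stmt_18_general n k a hA
end
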